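/- arXiv:2310.01394 — 3 statements merged into one kernel-verified Lean document; each statement's English description precedes it below -/
import Mathlib

section
/- For every fixed integer r ≥ 2 there exists a constant C = C(r) > 0 such that for all n ≥ 1 one has t^(r)(n) ≤ C · n^{2/(r+1)}; that is, for every n there exists an ordered r-matching M of size n all of whose pairs of twins have size at most C · n^{2/(r+1)}. -/
/-- A (sub-)matching: a finite set of pairwise disjoint `r`-element subsets
("edges") of the linearly ordered vertex set `ℕ`. -/
def IsMatching (r : ℕ) (M : Finset (Finset ℕ)) : Prop :=
  (∀ e ∈ M, e.card = r) ∧ ∀ e ∈ M, ∀ f ∈ M, e ≠ f → Disjoint e f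

/-- The vertex support of a matching: the union of its edges. -/
def mSupport (M : Finset (Finset ℕ)) : Finset ℕ := M.sup id

/-- An ordered `r`-matching of size `n`: `n` pairwise disjoint `r`-element edges
partitioning `[rn] = {1, …, rn}`. -/
def IsOrderedMatching (r n : ℕ) (M : Finset (Finset ℕ)) : Prop :=
  IsMatching r M ∧ M.card = n ∧ mSupport M = Finset.Icc 1 (r * n)

/-- Two ordered matchings are isomorphic if some (equivalently, the unique)
order-preserving bijection between their vertex supports maps edges onto edges. -/
def MatchIso (M N : Finset (Finset ℕ)) : Prop :=
  ∃ f : ℕ → ℕ, Set.BijOn f (mSupport M : Set ℕ) (mSupport N : Set ℕ) ∧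
    (∀ x ∈ mSupport M, ∀ y ∈ mSupport M, x < y → f x < f y) ∧
    N = M.image fun e => e.image f

/-- `M` contains twins of size `k`: a pair of vertex-disjoint isomorphic
sub-matchings of `M`, each with `k` edges. -/
def HasTwins (M : Finset (Finset ℕ)) (k : ℕ) : Prop :=
  ∃ M₁ M₂ : Finset (Finset ℕ), M₁ ⊆ M ∧ M₂ ⊆ M ∧
    Disjoint (mSupport M₁) (mSupport M₂) ∧ MatchIso M₁ M₂ ∧
    M₁.card = k ∧ M₂.card = k

/-- `t(M)`: the maximum size of twins in `M`. -/
noncomputable def twinMax (M : Finset (Finset ℕ)) : ℕ := sSup {k | HasTwins M k}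

/-- `t^(r)(n)`: the minimum of `t(M)` over all ordered `r`-matchings of size `n`. -/
noncomputable def minTwins (r n : ℕ) : ℕ :=
  sInf {t | ∃ M, IsOrderedMatching r n M ∧ twinMax M = t}

/-- A permutation `π` of `[n]` has twins of length `k`: two order-isomorphic
subsequences occupying disjoint sets of positions. -/
def PermTwins {n : ℕ} (π : Equiv.Perm (Fin n)) (k : ℕ) : Prop :=
  ∃ a b : Fin k → Fin n, StrictMono a ∧ StrictMono b ∧
    (∀ i j, a i ≠ b j) ∧ ∀ i j, (π (a i) < π (a j) ↔ π (b i) < π (b j))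

/-- `τ(n)`: the largest `k` such that every permutation of `[n]` has twins of length `k`. -/
noncomputable def permTau (n : ℕ) : ℕ :=
  sSup {k | ∀ π : Equiv.Perm (Fin n), PermTwins π k}

/-- An `r`-pattern, represented by its canonical representative: an ordered
`r`-matching of size `2` (on the vertex set `[2r]`). Every isomorphism class of
ordered `r`-matchings of size `2` contains exactly one such representative. -/
def IsPattern (r : ℕ) (P : Finset (Finset ℕ)) : Prop := IsOrderedMatching r 2 P

/-- A `P`-clique: a matching all of whose pairs of (distinct) edges form the pattern `P`. -/
def IsPClique (P M : Finset (Finset ℕ)) : Prop :=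
  ∀ e ∈ M, ∀ f ∈ M, e ≠ f → MatchIso {e, f} P

/-- `L(M)`: the size of the largest sub-matching of `M` that is a `P`-clique,
over all `r`-patterns `P`. -/
noncomputable def cliqueMax (r : ℕ) (M : Finset (Finset ℕ)) : ℕ :=
  sSup {k | ∃ P, IsPattern r P ∧ ∃ M' ⊆ M, IsPClique P M' ∧ M'.card = k}

/-- `L_r(n)`: the minimum of `L(M)` over all ordered `r`-matchings of size `n`. -/
noncomputable def minClique (r n : ℕ) : ℕ :=
  sInf {l | ∃ M, IsOrderedMatching r n M ∧ cliqueMax r M = l}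

/-!
Let `N(m)` be the number of ordered `r`-matchings of size `m`. A matching of size `n` with twins
of size `k` is determined by one twin up to isomorphism, the supports of the two twins, and the
remaining edges up to isomorphism, so at most `N(k) · C(rn, rk)² · N(n - 2k)` matchings have
twins of size `k`. Double counting the edge through a fixed vertex gives
`N(m + 1) = C(rm + r - 1, r - 1) · N(m)`, and with these growth rates the bound drops below `N(n)`
as soon as `k^(r+1)` exceeds `(6r)^(2r) n²`, that is for `k` of order `n^(2/(r+1))`.
-/

open Finset
open scoped Nat

section Support

variable {r : ℕ} {M N : Finset (Finset ℕ)} {e : Finset ℕ}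

lemma subset_mSupport (he : e ∈ M) : e ⊆ mSupport M := le_sup (f := id) he

lemma mem_mSupport {x : ℕ} : x ∈ mSupport M ↔ ∃ e ∈ M, x ∈ e := mem_sup

lemma mSupport_mono (h : M ⊆ N) : mSupport M ⊆ mSupport N := sup_mono h

lemma mSupport_union : mSupport (M ∪ N) = mSupport M ∪ mSupport N := sup_union

lemma mSupport_singleton : mSupport {e} = e := sup_singleton

lemma mSupport_insert : mSupport (insert e M) = e ∪ mSupport M := sup_insert

lemma mSupport_image (g : ℕ → ℕ) :
    mSupport (M.image (image g)) = (mSupport M).image g := by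
  induction M using Finset.induction with
  | empty => rfl
  | insert e M _ ih => rw [image_insert, mSupport_insert, mSupport_insert, ih, image_union]

lemma IsMatching.subset (h : IsMatching r M) (hN : N ⊆ M) : IsMatching r N :=
  ⟨fun e he => h.1 e (hN he), fun e he f hf hef => h.2 e (hN he) f (hN hf) hef⟩

lemma IsMatching.card_mSupport (h : IsMatching r M) : #(mSupport M) = r * #M := by
  rw [mSupport, sup_eq_biUnion, card_biUnion (t := id) h.2]
  exact (sum_const_nat h.1).trans (mul_comm _ _)

lemma IsMatching.disjoint_mSupport (h : IsMatching r M) {N N' : Finset (Finset ℕ)} (hN : N ⊆ M)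
    (hN' : N' ⊆ M) (hd : Disjoint N N') : Disjoint (mSupport N) (mSupport N') := by
  rw [mSupport, mSupport, Finset.disjoint_sup_left]
  intro e he
  rw [Finset.disjoint_sup_right]
  intro f hf
  exact h.2 e (hN he) f (hN' hf) fun hef => disjoint_left.mp hd he (hef ▸ hf)

lemma injOn_image_image {g : ℕ → ℕ} (hg : Set.InjOn g (mSupport M)) :
    Set.InjOn (image g) M := fun e he f hf hef => by
  rw [← coe_inj, ← hg.image_eq_image_iff (coe_subset.2 (subset_mSupport he))
    (coe_subset.2 (subset_mSupport hf)), ← coe_image, ← coe_image, hef]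

lemma IsMatching.image {g : ℕ → ℕ} (h : IsMatching r M) (hg : Set.InjOn g (mSupport M)) :
    IsMatching r (M.image (image g)) := by
  refine ⟨?_, ?_⟩
  · intro _ he'
    obtain ⟨e, he, rfl⟩ := mem_image.1 he'
    rw [card_image_of_injOn (hg.mono (subset_mSupport he)), h.1 e he]
  · intro _ he' _ hf' hef
    obtain ⟨e, he, rfl⟩ := mem_image.1 he'
    obtain ⟨f, hf, rfl⟩ := mem_image.1 hf'
    rw [← disjoint_coe, coe_image, coe_image]
    exact (disjoint_coe.2 (h.2 e he f hf fun h => hef (h ▸ rfl))).image hg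
      (coe_subset.2 (subset_mSupport he)) (coe_subset.2 (subset_mSupport hf))

lemma card_image_image {g : ℕ → ℕ} (hg : Set.InjOn g (mSupport M)) :
    #(M.image (image g)) = #M :=
  card_image_of_injOn (injOn_image_image hg)

end Support

section Transport

variable {S T U : Finset ℕ} {f : ℕ → ℕ}

lemma StrictMonoOn.eqOn_of_image_eq {g : ℕ → ℕ} (hf : StrictMonoOn f S) (hg : StrictMonoOn g S)
    (h : S.image f = S.image g) : Set.EqOn f g S := by
  set emb := S.orderEmbOfFin rfl
  have hemb : ∀ i, emb i ∈ S := S.orderEmbOfFin_mem rfl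
  have hfemb : StrictMono (f ∘ emb) := fun i j hij => hf (hemb i) (hemb j) (emb.strictMono hij)
  have hgemb : StrictMono (g ∘ emb) := fun i j hij => hg (hemb i) (hemb j) (emb.strictMono hij)
  have hrange : Set.range (f ∘ emb) = Set.range (g ∘ emb) := by
    rw [Set.range_comp, Set.range_comp, range_orderEmbOfFin, ← coe_image, ← coe_image, h]
  intro x hx
  obtain ⟨i, rfl⟩ : x ∈ Set.range emb := by rwa [range_orderEmbOfFin]
  exact congrFun ((hfemb.range_inj hgemb).1 hrange) i

/-- The increasing bijection `S → T` when `#T = #S` (and junk `0` otherwise). -/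
noncomputable def monoMap (S T : Finset ℕ) (x : ℕ) : ℕ :=
  if h : x ∈ S ∧ #T = #S then T.orderEmbOfFin h.2 ((S.orderIsoOfFin rfl).symm ⟨x, h.1⟩) else 0

lemma monoMap_mem (hST : #T = #S) {x : ℕ} (hx : x ∈ S) : monoMap S T x ∈ T := by
  rw [monoMap, dif_pos ⟨hx, hST⟩]
  exact orderEmbOfFin_mem T hST _

lemma strictMonoOn_monoMap (hST : #T = #S) : StrictMonoOn (monoMap S T) S := by
  intro x hx y hy hxy
  rw [monoMap, dif_pos ⟨hx, hST⟩, monoMap, dif_pos ⟨hy, hST⟩]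
  exact (orderEmbOfFin T hST).strictMono ((OrderIso.lt_iff_lt _).2 hxy)

lemma image_monoMap (hST : #T = #S) : S.image (monoMap S T) = T := by
  refine eq_of_subset_of_card_le (image_subset_iff.2 fun x hx => monoMap_mem hST hx) ?_
  rw [card_image_of_injOn (strictMonoOn_monoMap hST).injOn, hST]

lemma StrictMonoOn.eqOn_monoMap (hf : StrictMonoOn f S) (himg : S.image f = T) :
    Set.EqOn f (monoMap S T) S := by
  have hST : #T = #S := by rw [← himg, card_image_of_injOn hf.injOn]
  exact hf.eqOn_of_image_eq (strictMonoOn_monoMap hST) (himg.trans (image_monoMap hST).symm)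

noncomputable def transport (S T : Finset ℕ) (M : Finset (Finset ℕ)) : Finset (Finset ℕ) :=
  M.image (image (monoMap S T))

variable {M : Finset (Finset ℕ)}

lemma image_image_eq_transport (hS : mSupport M = S) (hf : StrictMonoOn f S)
    (himg : S.image f = T) : M.image (image f) = transport S T M := by
  refine image_congr fun e he => image_congr fun x hx => hf.eqOn_monoMap himg ?_
  exact hS ▸ subset_mSupport he hx

lemma transport_self (hS : mSupport M = S) : transport S S M = M := by
  rw [← image_image_eq_transport hS strictMonoOn_id image_id]
  exact (image_congr fun e _ => image_id).trans image_id

lemma transport_transport (hS : mSupport M = S) (hST : #T = #S) (hTU : #U = #T) :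
    transport T U (transport S T M) = transport S U M := by
  rw [transport, transport, image_image]
  refine (image_congr fun e _ => ?_).trans (image_image_eq_transport hS
    ((strictMonoOn_monoMap hTU).comp (strictMonoOn_monoMap hST) fun x hx => monoMap_mem hST hx) ?_)
  · exact image_image
  · rw [← image_image, image_monoMap hST, image_monoMap hTU]

lemma eq_transport_of_matchIso {N : Finset (Finset ℕ)} (h : MatchIso M N) :
    N = transport (mSupport M) (mSupport N) M := by
  obtain ⟨f, hbij, hmono, rfl⟩ := h
  refine image_image_eq_transport rfl (fun x hx y hy hxy => hmono x hx y hy hxy) ?_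
  rw [← coe_inj, coe_image]
  exact hbij.image_eq

end Transport

section PerfectMatchings

variable {r m n : ℕ} {S T V : Finset ℕ} {M N : Finset (Finset ℕ)}

open scoped Classical in
noncomputable def perfectMatchings (r : ℕ) (V : Finset ℕ) (m : ℕ) : Finset (Finset (Finset ℕ)) :=
  V.powerset.powerset.filter fun M => IsMatching r M ∧ #M = m ∧ mSupport M = V

lemma mem_perfectMatchings :
    M ∈ perfectMatchings r V m ↔ IsMatching r M ∧ #M = m ∧ mSupport M = V := by
  classical
  rw [perfectMatchings, mem_filter, mem_powerset, and_iff_right_iff_imp]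
  rintro ⟨-, -, hV⟩ e he
  exact mem_powerset.2 (hV ▸ subset_mSupport he)

lemma transport_mem_perfectMatchings (hM : M ∈ perfectMatchings r S m) (hST : #T = #S) :
    transport S T M ∈ perfectMatchings r T m := by
  obtain ⟨hmatch, hcard, hS⟩ := mem_perfectMatchings.1 hM
  have hinj : Set.InjOn (monoMap S T) (mSupport M) := hS ▸ (strictMonoOn_monoMap hST).injOn
  refine mem_perfectMatchings.2 ⟨hmatch.image hinj, (card_image_image hinj).trans hcard, ?_⟩
  rw [transport, mSupport_image, hS, image_monoMap hST]

lemma card_perfectMatchings_le (hST : #T = #S) :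
    #(perfectMatchings r T m) ≤ #(perfectMatchings r S m) := by
  refine card_le_card_of_surjOn (transport S T) fun M hM => ?_
  have hT := (mem_perfectMatchings.1 hM).2.2
  refine ⟨transport T S M, transport_mem_perfectMatchings hM hST.symm, ?_⟩
  rw [transport_transport hT hST.symm hST, transport_self hT]

lemma card_perfectMatchings_congr (hST : #S = #T) :
    #(perfectMatchings r S m) = #(perfectMatchings r T m) :=
  (card_perfectMatchings_le hST.symm).antisymm' (card_perfectMatchings_le hST)

lemma sdiff_mem_perfectMatchings (hM : M ∈ perfectMatchings r V n) (hN : N ⊆ M) :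
    M \ N ∈ perfectMatchings r (V \ mSupport N) (n - #N) := by
  obtain ⟨hmatch, hcard, hV⟩ := mem_perfectMatchings.1 hM
  refine mem_perfectMatchings.2
    ⟨hmatch.subset sdiff_subset, by rw [card_sdiff_of_subset hN, hcard], ?_⟩
  have hd := hmatch.disjoint_mSupport hN sdiff_subset disjoint_sdiff
  rw [← hV, ← union_sdiff_of_subset hN, mSupport_union, union_sdiff_cancel_left hd,
    union_sdiff_of_subset hN]

noncomputable def numMatchings (r m : ℕ) : ℕ := #(perfectMatchings r (Icc 1 (r * m)) m)

lemma card_perfectMatchings (hV : #V = r * m) : #(perfectMatchings r V m) = numMatchings r m :=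
  card_perfectMatchings_congr (by rw [hV, Nat.card_Icc, Nat.add_sub_cancel])

lemma isOrderedMatching_iff_mem :
    IsOrderedMatching r n M ↔ M ∈ perfectMatchings r (Icc 1 (r * n)) n :=
  mem_perfectMatchings.symm

end PerfectMatchings

section Recursion

lemma insert_mem_powersetCard {k t : ℕ} {V s : Finset ℕ} (ht : t ∈ V)
    (hs : s ∈ powersetCard k (V.erase t)) : insert t s ∈ powersetCard (k + 1) V := by
  obtain ⟨hsV, hs⟩ := mem_powersetCard.1 hs
  refine mem_powersetCard.2 ⟨insert_subset ht (hsV.trans (erase_subset t V)), ?_⟩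
  rw [card_insert_of_notMem fun hts => notMem_erase t V (hsV hts), hs]

variable {r m : ℕ} {V : Finset ℕ} {M : Finset (Finset ℕ)} {e : Finset ℕ}

lemma IsMatching.eq_of_mem_of_mem (h : IsMatching r M) {f : Finset ℕ} (he : e ∈ M) (hf : f ∈ M)
    {x : ℕ} (hxe : x ∈ e) (hxf : x ∈ f) : e = f :=
  by_contra fun hef => disjoint_left.1 (h.2 e he f hf hef) hxe hxf

lemma insert_mem_perfectMatchings {R : Finset (Finset ℕ)} (hR : R ∈ perfectMatchings r (V \ e) m)
    (heV : e ⊆ V) (he : #e = r) (heR : e ∉ R) : insert e R ∈ perfectMatchings r V (m + 1) := by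
  obtain ⟨hmatch, hcard, hV⟩ := mem_perfectMatchings.1 hR
  have hdisj : ∀ f ∈ R, Disjoint e f := fun f hf =>
    disjoint_of_subset_right (hV ▸ subset_mSupport hf) disjoint_sdiff
  refine mem_perfectMatchings.2 ⟨⟨fun f hf => ?_, fun f hf g hg hfg => ?_⟩, ?_, ?_⟩
  · rcases mem_insert.1 hf with rfl | hf
    exacts [he, hmatch.1 f hf]
  · rw [mem_insert] at hf hg
    rcases hf with rfl | hf
    · exact hdisj g (hg.resolve_left fun h => hfg h.symm)
    · rcases hg with rfl | hg
      · exact (hdisj f hf).symm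
      · exact hmatch.2 f hf g hg hfg
  · rw [card_insert_of_notMem heR, hcard]
  · rw [mSupport_insert, hV, union_sdiff_of_subset heV]

lemma card_filter_mem_perfectMatchings (hr : 0 < r) (heV : e ⊆ V) (he : #e = r) :
    #((perfectMatchings r V (m + 1)).filter (e ∈ ·)) = #(perfectMatchings r (V \ e) m) := by
  have he_notMem : ∀ R ∈ perfectMatchings r (V \ e) m, e ∉ R := fun R hR heR => by
    obtain ⟨x, hx⟩ := card_pos.1 (he ▸ hr)
    have := (mem_perfectMatchings.1 hR).2.2 ▸ subset_mSupport heR hx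
    exact (mem_sdiff.1 this).2 hx
  refine card_nbij' (·.erase e) (insert e) (fun M hM => ?_)
    (fun R hR => mem_filter.2 ⟨insert_mem_perfectMatchings hR heV he (he_notMem R hR),
      mem_insert_self e R⟩)
    (fun M hM => insert_erase (mem_filter.1 hM).2) (fun R hR => erase_insert (he_notMem R hR))
  obtain ⟨hM, heM⟩ := mem_filter.1 hM
  simpa [erase_eq, mSupport_singleton] using
    sdiff_mem_perfectMatchings hM (singleton_subset_iff.2 heM)

/-- Double counting the pairs `(M, s)` such that `insert t s` is the edge of `M` through `t`. -/
lemma card_perfectMatchings_succ (hr : 0 < r) {t : ℕ} (ht : t ∈ V) :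
    #(perfectMatchings r V (m + 1)) =
      ∑ s ∈ powersetCard (r - 1) (V.erase t), #(perfectMatchings r (V \ insert t s) m) := by
  classical
  have hunique : ∀ M ∈ perfectMatchings r V (m + 1),
      #((powersetCard (r - 1) (V.erase t)).bipartiteAbove (fun M s => insert t s ∈ M) M) = 1 := by
    intro M hM
    obtain ⟨hmatch, -, hV⟩ := mem_perfectMatchings.1 hM
    obtain ⟨e, heM, hte⟩ := mem_mSupport.1 (hV ▸ ht)
    refine card_eq_one.2 ⟨e.erase t, eq_singleton_iff_unique_mem.2 ⟨?_, fun s hs => ?_⟩⟩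
    · refine mem_filter.2 ⟨mem_powersetCard.2 ⟨erase_subset_erase t (hV ▸ subset_mSupport heM), ?_⟩,
        show insert t (e.erase t) ∈ M by rwa [insert_erase hte]⟩
      rw [card_erase_of_mem hte, hmatch.1 e heM]
    · obtain ⟨hs, hsM⟩ := mem_filter.1 hs
      have hts : t ∉ s := fun hts => notMem_erase t V ((mem_powersetCard.1 hs).1 hts)
      rw [← hmatch.eq_of_mem_of_mem hsM heM (mem_insert_self t s) hte, erase_insert hts]
  rw [card_eq_sum_ones, sum_congr rfl fun M hM => (hunique M hM).symm,
    sum_card_bipartiteAbove_eq_sum_card_bipartiteBelow]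
  refine sum_congr rfl fun s hs => ?_
  obtain ⟨hsV, hs⟩ := mem_powersetCard.1 (insert_mem_powersetCard ht hs)
  exact card_filter_mem_perfectMatchings hr hsV (hs.trans (Nat.sub_add_cancel hr))

lemma numMatchings_zero (r : ℕ) : numMatchings r 0 = 1 := by
  refine card_eq_one.2 ⟨∅, eq_singleton_iff_unique_mem.2 ⟨?_, fun M hM => ?_⟩⟩
  · exact mem_perfectMatchings.2 ⟨⟨by simp, by simp⟩, rfl, rfl⟩
  · exact card_eq_zero.1 (mem_perfectMatchings.1 hM).2.1

lemma numMatchings_succ (hr : 0 < r) (m : ℕ) :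
    numMatchings r (m + 1) = (r * m + (r - 1)).choose (r - 1) * numMatchings r m := by
  set V := Icc 1 (r * (m + 1))
  have hV : #V = r * m + r := by rw [Nat.card_Icc, Nat.add_sub_cancel, Nat.mul_succ]
  have h1 : 1 ∈ V := mem_Icc.2 ⟨le_rfl, by nlinarith⟩
  have hfiber : ∀ s ∈ powersetCard (r - 1) (V.erase 1),
      #(perfectMatchings r (V \ insert 1 s) m) = numMatchings r m := fun s hs => by
    obtain ⟨hsV, hs⟩ := mem_powersetCard.1 (insert_mem_powersetCard h1 hs)
    refine card_perfectMatchings ?_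
    rw [card_sdiff_of_subset hsV, hs, hV]
    omega
  rw [numMatchings, card_perfectMatchings_succ hr h1, sum_congr rfl hfiber, sum_const,
    card_powersetCard, card_erase_of_mem h1, hV, smul_eq_mul]
  congr 2
  omega

end Recursion

section Growth

variable {r : ℕ}

lemma numMatchings_pos (hr : 0 < r) (m : ℕ) : 0 < numMatchings r m := by
  induction m with
  | zero => rw [numMatchings_zero]; exact one_pos
  | succ m ih => rw [numMatchings_succ hr]; exact Nat.mul_pos (Nat.choose_pos (by omega)) ih

lemma numMatchings_succ_le (hr : 0 < r) (m : ℕ) :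
    numMatchings r (m + 1) ≤ (r * m + 1) ^ (r - 1) * numMatchings r m := by
  rw [numMatchings_succ hr]
  gcongr
  exact Nat.choose_add_le_add_one_pow _ _

lemma pow_mul_numMatchings_le (hr : 0 < r) (m : ℕ) :
    (r * m + 1) ^ (r - 1) * numMatchings r m ≤ (r - 1)! * numMatchings r (m + 1) := by
  rw [numMatchings_succ hr, ← mul_assoc, ← Nat.descFactorial_eq_factorial_mul_choose]
  gcongr
  have := Nat.pow_sub_le_descFactorial (r * m + (r - 1)) (r - 1)
  rwa [show r * m + (r - 1) + 1 - (r - 1) = r * m + 1 by omega] at this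

lemma numMatchings_le_pow (hr : 0 < r) (k : ℕ) : numMatchings r k ≤ (r * k) ^ ((r - 1) * k) := by
  suffices ∀ m ≤ k, numMatchings r m ≤ (r * k) ^ ((r - 1) * m) from this k le_rfl
  intro m hm
  induction m with
  | zero => simp [numMatchings_zero]
  | succ m ih =>
    calc numMatchings r (m + 1) ≤ (r * m + 1) ^ (r - 1) * numMatchings r m :=
          numMatchings_succ_le hr m
      _ ≤ (r * k) ^ (r - 1) * (r * k) ^ ((r - 1) * m) := by
          gcongr
          · nlinarith
          · exact ih (by omega)
      _ = (r * k) ^ ((r - 1) * (m + 1)) := by ring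

lemma pow_mul_numMatchings_le_factorial_pow (hr : 0 < r) (s t : ℕ) :
    (r * s + 1) ^ ((r - 1) * t) * numMatchings r s ≤ (r - 1)! ^ t * numMatchings r (s + t) := by
  induction t with
  | zero => simp
  | succ t ih =>
    calc (r * s + 1) ^ ((r - 1) * (t + 1)) * numMatchings r s
        = (r * s + 1) ^ (r - 1) * ((r * s + 1) ^ ((r - 1) * t) * numMatchings r s) := by ring
      _ ≤ (r * (s + t) + 1) ^ (r - 1) * ((r - 1)! ^ t * numMatchings r (s + t)) := by
          gcongr
          omega
      _ = (r - 1)! ^ t * ((r * (s + t) + 1) ^ (r - 1) * numMatchings r (s + t)) := by ring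
      _ ≤ (r - 1)! ^ t * ((r - 1)! * numMatchings r (s + t + 1)) :=
          Nat.mul_le_mul_left _ (pow_mul_numMatchings_le hr (s + t))
      _ = (r - 1)! ^ (t + 1) * numMatchings r (s + (t + 1)) := by rw [← add_assoc]; ring

end Growth

section Twins

variable {M N M' : Finset (Finset ℕ)} {j k : ℕ}

lemma MatchIso.restrict (h : MatchIso M N) (hM' : M' ⊆ M) :
    ∃ N' ⊆ N, MatchIso M' N' ∧ #N' = #M' ∧ mSupport N' ⊆ mSupport N := by
  obtain ⟨f, hbij, hmono, rfl⟩ := h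
  have hsupp : mSupport M' ⊆ mSupport M := mSupport_mono hM'
  have hinj : Set.InjOn f (mSupport M') := hbij.injOn.mono (coe_subset.2 hsupp)
  refine ⟨M'.image (image f), image_subset_image hM', ⟨f, ?_, fun x hx y hy =>
    hmono x (hsupp hx) y (hsupp hy), rfl⟩, card_image_image hinj, ?_⟩
  · rw [mSupport_image, coe_image]
    exact hinj.bijOn_image
  · rw [mSupport_image, mSupport_image]
    exact image_subset_image hsupp

lemma HasTwins.mono (h : HasTwins M j) (hkj : k ≤ j) : HasTwins M k := by
  obtain ⟨M₁, M₂, h₁, h₂, hd, hiso, hc₁, hc₂⟩ := h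
  obtain ⟨M₁', hM₁', hc₁'⟩ := exists_subset_card_eq (hc₁ ▸ hkj)
  obtain ⟨M₂', hM₂', hiso', hc₂', hsupp⟩ := hiso.restrict hM₁'
  exact ⟨M₁', M₂', hM₁'.trans h₁, hM₂'.trans h₂, hd.mono (mSupport_mono hM₁') hsupp, hiso',
    hc₁', hc₂'.trans hc₁'⟩

lemma HasTwins.le_card (h : HasTwins M k) : k ≤ #M := by
  obtain ⟨M₁, -, h₁, -, -, -, rfl, -⟩ := h
  exact card_le_card h₁

lemma hasTwins_zero (M : Finset (Finset ℕ)) : HasTwins M 0 :=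
  ⟨∅, ∅, empty_subset M, empty_subset M, disjoint_bot_left,
    ⟨id, Set.bijOn_id _, fun _ _ _ _ hxy => hxy, rfl⟩, rfl, rfl⟩

lemma twinMax_le_card (M : Finset (Finset ℕ)) : twinMax M ≤ #M :=
  csSup_le ⟨0, hasTwins_zero M⟩ fun _ hj => HasTwins.le_card hj

lemma twinMax_lt (hk : 0 < k) (h : ¬HasTwins M k) : twinMax M < k :=
  Nat.lt_of_le_sub_one hk <| csSup_le ⟨0, hasTwins_zero M⟩ fun _ hj =>
    Nat.le_sub_one_of_lt <| lt_of_not_ge fun hkj => h (HasTwins.mono hj hkj)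

lemma minTwins_le_twinMax {r n : ℕ} (h : IsOrderedMatching r n M) : minTwins r n ≤ twinMax M :=
  Nat.sInf_le ⟨M, h, rfl⟩

lemma minTwins_le {r : ℕ} (hr : 0 < r) (n : ℕ) : minTwins r n ≤ n := by
  obtain ⟨M, hM⟩ := card_pos.1 (numMatchings_pos hr n)
  have hM' := isOrderedMatching_iff_mem.2 hM
  exact (minTwins_le_twinMax hM').trans ((twinMax_le_card M).trans_eq hM'.2.1)

end Twins

section TwinCount

variable {r n k : ℕ} {V : Finset ℕ} {M N : Finset (Finset ℕ)}

lemma IsMatching.disjoint_of_disjoint_mSupport (h : IsMatching r M) (hr : 0 < r)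
    (hd : Disjoint (mSupport M) (mSupport N)) : Disjoint M N := by
  refine disjoint_left.2 fun e heM heN => ?_
  obtain ⟨x, hx⟩ := card_pos.1 ((h.1 e heM).symm ▸ hr)
  exact disjoint_left.1 hd (subset_mSupport heM hx) (subset_mSupport heN hx)

/-- Rebuilds a matching from a copy `P` of one twin on `[rk]`, the supports `A`, `B` of the twins,
and a copy `R` of the remaining edges on `[r(n - 2k)]`. -/
noncomputable def assemble (r n k : ℕ) (V : Finset ℕ)
    (x : Finset (Finset ℕ) × Finset ℕ × Finset ℕ × Finset (Finset ℕ)) : Finset (Finset ℕ) :=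
  let ⟨P, A, B, R⟩ := x
  transport (Icc 1 (r * k)) A P ∪ transport (Icc 1 (r * k)) B P ∪
    transport (Icc 1 (r * (n - 2 * k))) (V \ (A ∪ B)) R

lemma mem_image_assemble (hr : 0 < r) (hM : M ∈ perfectMatchings r V n) (h : HasTwins M k) :
    M ∈ (perfectMatchings r (Icc 1 (r * k)) k ×ˢ powersetCard (r * k) V ×ˢ
      powersetCard (r * k) V ×ˢ perfectMatchings r (Icc 1 (r * (n - 2 * k))) (n - 2 * k)).image
        (assemble r n k V) := by
  obtain ⟨hmatch, hcard, hV⟩ := mem_perfectMatchings.1 hM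
  obtain ⟨M₁, M₂, h₁, h₂, hd, hiso, hc₁, hc₂⟩ := h
  set K := Icc 1 (r * k)
  set A := mSupport M₁
  set B := mSupport M₂
  have hK : #K = r * k := by simp [K]
  have hA : #A = r * k := by rw [(hmatch.subset h₁).card_mSupport, hc₁]
  have hB : #B = r * k := by rw [(hmatch.subset h₂).card_mSupport, hc₂]
  have hAV : A ⊆ V := hV ▸ mSupport_mono h₁
  have hBV : B ⊆ V := hV ▸ mSupport_mono h₂
  have h₁₂ : M₁ ∪ M₂ ⊆ M := union_subset h₁ h₂
  have hc₁₂ : #(M₁ ∪ M₂) = 2 * k := by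
    rw [card_union_of_disjoint ((hmatch.subset h₁).disjoint_of_disjoint_mSupport hr hd), hc₁, hc₂,
      two_mul]
  have hrest := sdiff_mem_perfectMatchings hM h₁₂
  rw [mSupport_union, hc₁₂] at hrest
  set W := V \ (A ∪ B)
  set L := Icc 1 (r * (n - 2 * k))
  obtain ⟨hrest_match, hrest_card, hrest_supp⟩ := mem_perfectMatchings.1 hrest
  have hW : #L = #W := by
    rw [← hrest_supp, hrest_match.card_mSupport, hrest_card]
    simp [L]
  have hM₁ : M₁ ∈ perfectMatchings r A k := mem_perfectMatchings.2 ⟨hmatch.subset h₁, hc₁, rfl⟩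
  refine mem_image.2 ⟨(transport A K M₁, A, B, transport W L (M \ (M₁ ∪ M₂))),
    mem_product.2 ⟨transport_mem_perfectMatchings hM₁ (hK.trans hA.symm), mem_product.2
      ⟨mem_powersetCard.2 ⟨hAV, hA⟩, mem_product.2 ⟨mem_powersetCard.2 ⟨hBV, hB⟩,
        transport_mem_perfectMatchings hrest hW⟩⟩⟩, ?_⟩
  have hKA : #K = #A := hK.trans hA.symm
  simp only [assemble]
  rw [transport_transport rfl hKA hKA.symm, transport_self rfl,
    transport_transport rfl hKA (hB.trans hK.symm), ← eq_transport_of_matchIso hiso,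
    transport_transport hrest_supp hW hW.symm,
    transport_self hrest_supp, union_sdiff_of_subset h₁₂]

open scoped Classical in
lemma card_filter_hasTwins_le (hr : 0 < r) :
    #((perfectMatchings r V n).filter (HasTwins · k)) ≤
      numMatchings r k * (#V).choose (r * k) ^ 2 * numMatchings r (n - 2 * k) := by
  refine (card_le_card fun M hM => mem_image_assemble hr (mem_filter.1 hM).1
    (mem_filter.1 hM).2).trans (card_image_le.trans_eq ?_)
  simp only [card_product, card_powersetCard, numMatchings]
  ring

end TwinCount

section Estimates

lemma pow_self_le_three_pow_mul_factorial (a : ℕ) : a ^ a ≤ 3 ^ a * a ! := by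
  have hexp : Real.exp a ≤ 3 ^ a := by
    rw [← Real.exp_one_pow]
    gcongr
    exact Real.exp_one_lt_d9.le.trans (by norm_num)
  have h := (Real.pow_div_factorial_le_exp _ (Nat.cast_nonneg a) a).trans hexp
  rw [div_le_iff₀ (by positivity)] at h
  exact_mod_cast h

lemma choose_mul_pow_self_le (a b : ℕ) : b.choose a * a ^ a ≤ (3 * b) ^ a :=
  calc b.choose a * a ^ a ≤ b.choose a * (3 ^ a * a !) := by
        gcongr; exact pow_self_le_three_pow_mul_factorial a
    _ = 3 ^ a * b.descFactorial a := by rw [Nat.descFactorial_eq_factorial_mul_choose]; ring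
    _ ≤ (3 * b) ^ a := by rw [mul_pow]; gcongr; exact Nat.descFactorial_le_pow b a

lemma twin_count_base_lt {r n k s : ℕ} (hr : 0 < r) (hs : n ≤ 2 * s) (hk : 0 < k)
    (hbig : (6 * r) ^ (2 * r) * n ^ 2 < k ^ (r + 1)) :
    (r * k) ^ (r - 1) * ((3 * (r * n)) ^ r) ^ 2 * (r - 1)! ^ 2 <
      ((r * s + 1) ^ (r - 1)) ^ 2 * ((r * k) ^ r) ^ 2 := by
  obtain ⟨q, hq⟩ : ∃ q, r = q + 1 := ⟨r - 1, by omega⟩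
  have hq' : r - 1 = q := by omega
  rw [hq']
  set c := r * s + 1
  have hfac : q ! ^ 2 ≤ r ^ (2 * q) := by
    rw [pow_mul']
    gcongr
    exact (Nat.factorial_le_pow q).trans (Nat.pow_le_pow_left (by omega) q)
  have hnc : 3 * (r * n) ≤ 6 * c := by
    have := Nat.mul_le_mul_left r hs
    simp only [c]
    nlinarith
  have hc : 0 < c := Nat.succ_pos _
  clear_value c
  calc (r * k) ^ q * ((3 * (r * n)) ^ r) ^ 2 * q ! ^ 2
      = (r * k) ^ q * (3 * (r * n)) ^ (2 * q) * (3 * (r * n)) ^ 2 * q ! ^ 2 := by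
        subst hq; ring
    _ ≤ (r * k) ^ q * (6 * c) ^ (2 * q) * (3 * (r * n)) ^ 2 * r ^ (2 * q) := by gcongr
    _ = (c ^ q) ^ 2 * ((r * k) ^ q * ((6 * r) ^ (2 * q) * (9 * r ^ 2) * n ^ 2)) := by ring
    _ ≤ (c ^ q) ^ 2 * ((r * k) ^ q * ((6 * r) ^ (2 * r) * n ^ 2)) := by
        gcongr
        rw [show 2 * r = 2 * q + 2 by omega, pow_add]
        gcongr
        nlinarith
    _ < (c ^ q) ^ 2 * ((r * k) ^ q * k ^ (r + 1)) := by gcongr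
    _ ≤ (c ^ q) ^ 2 * ((r * k) ^ q * (r * k) ^ (r + 1)) := by
        gcongr
        exact Nat.le_mul_of_pos_left k hr
    _ = (c ^ q) ^ 2 * ((r * k) ^ r) ^ 2 := by subst hq; ring

end Estimates

section Conclusion

variable {r n k : ℕ}

lemma pos_of_pow_mul_lt (hbig : (6 * r) ^ (2 * r) * n ^ 2 < k ^ (r + 1)) : 0 < k :=
  Nat.pos_of_ne_zero fun hk => by simp [hk] at hbig

lemma twin_count_lt_numMatchings (hr : 0 < r) (h4 : 4 * k ≤ n)
    (hbig : (6 * r) ^ (2 * r) * n ^ 2 < k ^ (r + 1)) :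
    numMatchings r k * (r * n).choose (r * k) ^ 2 * numMatchings r (n - 2 * k) <
      numMatchings r n := by
  have hk := pos_of_pow_mul_lt hbig
  set s := n - 2 * k
  set a := r * k
  have hNk : numMatchings r k ≤ (a ^ (r - 1)) ^ k := by
    rw [← pow_mul]; exact numMatchings_le_pow hr k
  have hC : (r * n).choose a * (a ^ r) ^ k ≤ ((3 * (r * n)) ^ r) ^ k := by
    rw [← pow_mul, ← pow_mul]; exact choose_mul_pow_self_le a (r * n)
  set P := (a ^ r) ^ k
  set F := (r - 1)! ^ 2
  have hNs : (((r * s + 1) ^ (r - 1)) ^ 2) ^ k * numMatchings r s ≤ F ^ k * numMatchings r n := by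
    rw [← pow_mul, ← pow_mul, ← pow_mul, show n = s + 2 * k by omega]
    exact pow_mul_numMatchings_le_factorial_pow hr s (2 * k)
  have hbase := twin_count_base_lt hr (show n ≤ 2 * s by omega) hk hbig
  have hs := numMatchings_pos hr s
  refine Nat.lt_of_mul_lt_mul_right (a := P ^ 2 * F ^ k) ?_
  calc numMatchings r k * (r * n).choose a ^ 2 * numMatchings r s * (P ^ 2 * F ^ k)
      = numMatchings r k * ((r * n).choose a * P) ^ 2 * F ^ k * numMatchings r s := by ring
    _ ≤ (a ^ (r - 1)) ^ k * (((3 * (r * n)) ^ r) ^ k) ^ 2 * F ^ k * numMatchings r s := by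
        gcongr
    _ = (a ^ (r - 1) * ((3 * (r * n)) ^ r) ^ 2 * F) ^ k * numMatchings r s := by ring
    _ < (((r * s + 1) ^ (r - 1)) ^ 2 * (a ^ r) ^ 2) ^ k * numMatchings r s := by
        gcongr
    _ = (((r * s + 1) ^ (r - 1)) ^ 2) ^ k * numMatchings r s * P ^ 2 := by ring
    _ ≤ F ^ k * numMatchings r n * P ^ 2 := by gcongr
    _ = numMatchings r n * (P ^ 2 * F ^ k) := by ring

lemma exists_not_hasTwins (hr : 0 < r) (h4 : 4 * k ≤ n)
    (hbig : (6 * r) ^ (2 * r) * n ^ 2 < k ^ (r + 1)) :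
    ∃ M, IsOrderedMatching r n M ∧ ¬HasTwins M k := by
  classical
  by_contra! h
  have hall : (perfectMatchings r (Icc 1 (r * n)) n).filter (HasTwins · k) =
      perfectMatchings r (Icc 1 (r * n)) n :=
    filter_true_of_mem fun M hM => h M (isOrderedMatching_iff_mem.2 hM)
  have hle := card_filter_hasTwins_le (V := Icc 1 (r * n)) (n := n) (k := k) hr
  rw [hall, Nat.card_Icc, Nat.add_sub_cancel] at hle
  exact (twin_count_lt_numMatchings hr h4 hbig).not_ge hle

lemma minTwins_lt (hr : 0 < r) (hbig : (6 * r) ^ (2 * r) * n ^ 2 < k ^ (r + 1)) :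
    minTwins r n < 4 * k := by
  rcases le_or_gt (4 * k) n with h4 | h4
  · obtain ⟨M, hM, hnot⟩ := exists_not_hasTwins hr h4 hbig
    exact (minTwins_le_twinMax hM).trans_lt
      ((twinMax_lt (pos_of_pow_mul_lt hbig) hnot).trans_le (by omega))
  · exact (minTwins_le hr n).trans_lt h4

lemma pow_mul_sq_lt_ceil_pow (hr : 0 < r) (hn : 0 < n) {X : ℝ} (hX : 0 ≤ X)
    (hXpow : X ^ (r + 1) = (n : ℝ) ^ 2) :
    (6 * r) ^ (2 * r) * n ^ 2 < ⌈(6 * r : ℝ) ^ 2 * X⌉₊ ^ (r + 1) := by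
  have h6r : (1 : ℝ) < (6 * r) ^ 2 := by
    have : (1 : ℝ) ≤ r := by exact_mod_cast hr
    nlinarith
  have hpos : (0 : ℝ) < (6 * r) ^ (2 * r) * n ^ 2 := by positivity
  have key : ((6 * r) ^ (2 * r) * n ^ 2 : ℝ) < ((6 * r : ℝ) ^ 2 * X) ^ (r + 1) :=
    calc ((6 * r) ^ (2 * r) * n ^ 2 : ℝ) < (6 * r) ^ (2 * r) * n ^ 2 * (6 * r) ^ 2 :=
          lt_mul_of_one_lt_right hpos h6r
      _ = ((6 * r : ℝ) ^ 2) ^ (r + 1) * X ^ (r + 1) := by rw [hXpow, ← pow_mul]; ring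
      _ = ((6 * r : ℝ) ^ 2 * X) ^ (r + 1) := (mul_pow _ _ _).symm
  exact_mod_cast key.trans_le (pow_le_pow_left₀ (by positivity) (Nat.le_ceil _) _)

end Conclusion

/-- For every fixed `r ≥ 2` there is `C = C(r) > 0` such that for all `n ≥ 1`,
`t^(r)(n) ≤ C · n^{2/(r+1)}`. -/
theorem deterministic_upper_bound :
    ∀ r : ℕ, 2 ≤ r → ∃ C : ℝ, 0 < C ∧ ∀ n : ℕ, 1 ≤ n →
      (minTwins r n : ℝ) ≤ C * (n : ℝ) ^ ((2 : ℝ) / ((r : ℝ) + 1)) := by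
  intro r hr
  refine ⟨148 * r ^ 2, by positivity, fun n hn => ?_⟩
  set X := (n : ℝ) ^ ((2 : ℝ) / ((r : ℝ) + 1))
  have hX : 1 ≤ X := Real.one_le_rpow (by exact_mod_cast hn) (by positivity)
  have hXpow : X ^ (r + 1) = (n : ℝ) ^ 2 := by
    rw [← Real.rpow_natCast, ← Real.rpow_mul (by positivity)]
    push_cast
    rw [div_mul_cancel₀ _ (by positivity), Real.rpow_two]
  have hlt := minTwins_lt (by omega) (pow_mul_sq_lt_ceil_pow (by omega) hn (by positivity) hXpow)
  have hceil := Nat.ceil_lt_add_one (show (0 : ℝ) ≤ (6 * r) ^ 2 * X by positivity)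
  have hr2 : (1 : ℝ) ≤ r ^ 2 := by exact_mod_cast Nat.one_le_pow _ _ (by omega)
  calc (minTwins r n : ℝ) ≤ 4 * ⌈(6 * r : ℝ) ^ 2 * X⌉₊ := by exact_mod_cast hlt.le
    _ ≤ 4 * ((6 * r) ^ 2 * X + 1) := by linarith
    _ ≤ 148 * r ^ 2 * X := by nlinarith
end

section
/- For every fixed integer r ≥ 2 and every constant c > e, the proportion of ordered r-matchings M of size n (among all (rn)!/((r!)^n · n!) ordered r-matchings on [rn]) that contain a pair of twins of size at least c · n^{2/(r+1)} tends to 0 as n → ∞. Equivalently, a uniformly random ordered r-matching of size n asymptotically almost surely satisfies t(M) < c · n^{2/(r+1)}. -/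
section Aux
open Finset

/-- All matchings with `r`-element edges and support exactly `V`. -/
def matchingsOn (r : ℕ) (V : Finset ℕ) : Finset (Finset (Finset ℕ)) :=
  (V.powerset.filter fun e => e.card = r).powerset.filter
    (fun M => (∀ e ∈ M, ∀ f ∈ M, e ≠ f → Disjoint e f) ∧ M.sup id = V)

lemma mem_matchingsOn {r : ℕ} {V : Finset ℕ} {M : Finset (Finset ℕ)} :
    M ∈ matchingsOn r V ↔
      (∀ e ∈ M, e.card = r) ∧ (∀ e ∈ M, ∀ f ∈ M, e ≠ f → Disjoint e f) ∧ M.sup id = V := by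
  rw [matchingsOn, mem_filter, mem_powerset]
  constructor
  · rintro ⟨hs, hd, hv⟩
    exact ⟨fun e he => (mem_filter.1 (hs he)).2, hd, hv⟩
  · rintro ⟨hc, hd, hv⟩
    refine ⟨fun e he => mem_filter.2 ⟨mem_powerset.2 ?_, hc e he⟩, hd, hv⟩
    rw [← hv]
    exact le_sup (f := id) he

lemma card_msupport {r : ℕ} {M : Finset (Finset ℕ)} (hc : ∀ e ∈ M, e.card = r)
    (hd : ∀ e ∈ M, ∀ f ∈ M, e ≠ f → Disjoint e f) : (mSupport M).card = r * M.card := by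
  classical
  show ((M.sup id).card) = r * M.card
  have hb := Finset.card_biUnion (s := M) (t := id) (fun e he f hf hef => hd e he f hf hef)
  rw [Finset.sup_eq_biUnion, hb]
  calc ∑ u ∈ M, (id u).card = ∑ _u ∈ M, r := Finset.sum_congr rfl (fun e he => hc e he)
  _ = r * M.card := by rw [Finset.sum_const, smul_eq_mul, mul_comm]

lemma matchingsOn_card_mul (r : ℕ) (hr : 0 < r) :
    ∀ (m : ℕ) (V : Finset ℕ), V.card = r * m →
      (matchingsOn r V).card * (r.factorial ^ m * m.factorial) = (r * m).factorial := by
  obtain ⟨s, rfl⟩ : ∃ s, r = s + 1 := ⟨r - 1, by omega⟩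
  intro m
  induction m with
  | zero =>
      intro V hV
      rw [Nat.mul_zero, Finset.card_eq_zero] at hV
      subst hV
      have h1 : matchingsOn (s+1) ∅ = {∅} := by
        ext M
        simp only [mem_matchingsOn, mem_singleton]
        constructor
        · rintro ⟨hc, -, hsup⟩
          rcases M.eq_empty_or_nonempty with rfl | ⟨e, he⟩
          · rfl
          · exfalso
            have he' : e ⊆ (∅ : Finset ℕ) := by
              rw [← hsup]; exact le_sup (f := id) he
            have hce := hc e he
            rw [Finset.subset_empty] at he'
            subst he'
            simp at hce
        · rintro rfl
          refine ⟨by simp, by simp, by simp⟩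
      rw [h1]
      simp
  | succ m ih =>
      intro V hV
      have hVne : V.Nonempty := by
        rw [← Finset.card_pos, hV]; positivity
      set v := V.min' hVne with hv
      have hvV : v ∈ V := V.min'_mem hVne
      set E := (V.powersetCard (s+1)).filter (fun e => v ∈ e) with hE
      have hEmem : ∀ e : Finset ℕ, e ∈ E ↔ e ⊆ V ∧ e.card = s + 1 ∧ v ∈ e := by
        intro e
        simp only [hE, mem_filter, mem_powersetCard, and_assoc]
      have hdecomp : matchingsOn (s+1) V
          = E.biUnion (fun e => (matchingsOn (s+1) (V \ e)).image (insert e)) := by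
        ext M
        simp only [mem_biUnion, Finset.mem_image]
        constructor
        · intro hM
          obtain ⟨hc, hd, hsup⟩ := mem_matchingsOn.1 hM
          have hvsup : v ∈ M.sup id := by rw [hsup]; exact hvV
          obtain ⟨e, heM, hve⟩ := Finset.mem_sup.1 hvsup
          have heV : e ⊆ V := by rw [← hsup]; exact le_sup (f := id) heM
          refine ⟨e, (hEmem e).2 ⟨heV, hc e heM, hve⟩, M.erase e,
            mem_matchingsOn.2 ⟨?_, ?_, ?_⟩, Finset.insert_erase heM⟩
          · exact fun f hf => hc f (Finset.mem_of_mem_erase hf)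
          · exact fun f hf g hg => hd f (Finset.mem_of_mem_erase hf) g (Finset.mem_of_mem_erase hg)
          · apply Finset.Subset.antisymm
            · intro x hx
              obtain ⟨f, hf, hxf⟩ := Finset.mem_sup.1 hx
              have hfM := Finset.mem_of_mem_erase hf
              have hfe : f ≠ e := Finset.ne_of_mem_erase hf
              refine Finset.mem_sdiff.2 ⟨?_, fun hxe => ?_⟩
              · rw [← hsup]; exact (le_sup (f := id) hfM) hxf
              · exact (Finset.disjoint_left.1 (hd f hfM e heM hfe)) hxf hxe
            · intro x hx
              obtain ⟨hxV, hxe⟩ := Finset.mem_sdiff.1 hx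
              have hxs : x ∈ M.sup id := by rw [hsup]; exact hxV
              obtain ⟨f, hfM, hxf⟩ := Finset.mem_sup.1 hxs
              exact Finset.mem_sup.2 ⟨f, Finset.mem_erase.2 ⟨fun h => hxe (h ▸ hxf), hfM⟩, hxf⟩
        · rintro ⟨e, heE, M', hM', rfl⟩
          obtain ⟨heV, hecard, hve⟩ := (hEmem e).1 heE
          obtain ⟨hc, hd, hsup⟩ := mem_matchingsOn.1 hM'
          have hsubVe : ∀ f ∈ M', f ⊆ V \ e := fun f hf => by
            rw [← hsup]; exact le_sup (f := id) hf
          refine mem_matchingsOn.2 ⟨?_, ?_, ?_⟩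
          · intro f hf
            rcases Finset.mem_insert.1 hf with rfl | hf
            · exact hecard
            · exact hc f hf
          · intro f hf g hg hfg
            rcases Finset.mem_insert.1 hf with rfl | hf'
            · rcases Finset.mem_insert.1 hg with rfl | hg'
              · exact absurd rfl hfg
              · exact Finset.disjoint_left.2 fun x hxf hxg =>
                  (Finset.mem_sdiff.1 (hsubVe g hg' hxg)).2 hxf
            · rcases Finset.mem_insert.1 hg with rfl | hg'
              · exact Finset.disjoint_left.2 fun x hxf hxg =>
                  (Finset.mem_sdiff.1 (hsubVe f hf' hxf)).2 hxg
              · exact hd f hf' g hg' hfg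
          · rw [Finset.sup_insert, hsup]
            have := Finset.union_sdiff_of_subset heV
            simpa using this
      have hdisjU : ∀ e₁ ∈ E, ∀ e₂ ∈ E, e₁ ≠ e₂ →
          Disjoint ((matchingsOn (s+1) (V \ e₁)).image (insert e₁))
            ((matchingsOn (s+1) (V \ e₂)).image (insert e₂)) := by
        intro e₁ h₁ e₂ h₂ hne
        rw [Finset.disjoint_left]
        intro M hMi₁ hMi₂
        simp only [Finset.mem_image] at hMi₁ hMi₂
        obtain ⟨M₁, hM₁, rfl⟩ := hMi₁
        obtain ⟨M₂, hM₂, hM₂e⟩ := hMi₂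
        obtain ⟨hV₁, hc₁, hv₁⟩ := (hEmem e₁).1 h₁
        obtain ⟨hV₂, hc₂, hv₂⟩ := (hEmem e₂).1 h₂
        have he₂mem : e₂ ∈ insert e₁ M₁ := by rw [← hM₂e]; exact Finset.mem_insert_self _ _
        rcases Finset.mem_insert.1 he₂mem with h | h
        · exact hne h.symm
        · obtain ⟨-, -, hsup₁⟩ := mem_matchingsOn.1 hM₁
          have hsub : e₂ ⊆ V \ e₁ := by rw [← hsup₁]; exact le_sup (f := id) h
          exact (Finset.mem_sdiff.1 (hsub hv₂)).2 hv₁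
      have himg : ∀ e ∈ E, ((matchingsOn (s+1) (V \ e)).image (insert e)).card
          = (matchingsOn (s+1) (V \ e)).card := by
        intro e he
        apply Finset.card_image_of_injOn
        intro M₁ h₁ M₂ h₂ hins
        simp only [Finset.mem_coe] at h₁ h₂
        obtain ⟨-, -, hs₁⟩ := mem_matchingsOn.1 h₁
        obtain ⟨-, -, hs₂⟩ := mem_matchingsOn.1 h₂
        obtain ⟨-, -, hve⟩ := (hEmem e).1 he
        have hnot : ∀ M' : Finset (Finset ℕ), M'.sup id = V \ e → e ∉ M' := by
          intro M' hsup hmem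
          have hsub : e ⊆ V \ e := by rw [← hsup]; exact le_sup (f := id) hmem
          exact (Finset.mem_sdiff.1 (hsub hve)).2 hve
        calc M₁ = (insert e M₁).erase e := (Finset.erase_insert (hnot M₁ hs₁)).symm
        _ = (insert e M₂).erase e := by rw [hins]
        _ = M₂ := Finset.erase_insert (hnot M₂ hs₂)
      have hEcard : E.card = ((s+1)*m + s).choose s := by
        have hEeq : E = ((V.erase v).powersetCard s).image (insert v) := by
          ext e
          rw [hEmem]
          simp only [Finset.mem_image, mem_powersetCard]
          constructor
          · rintro ⟨heV, hecard, hve⟩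
            refine ⟨e.erase v, ⟨Finset.erase_subset_erase v heV, ?_⟩, Finset.insert_erase hve⟩
            rw [Finset.card_erase_of_mem hve, hecard]
            omega
          · rintro ⟨t, ⟨htsub, htcard⟩, rfl⟩
            have hvt : v ∉ t := fun h => (Finset.notMem_erase v V) (htsub h)
            refine ⟨Finset.insert_subset hvV (htsub.trans (Finset.erase_subset v V)), ?_,
              Finset.mem_insert_self v t⟩
            rw [Finset.card_insert_of_notMem hvt, htcard]
        rw [hEeq, Finset.card_image_of_injOn, Finset.card_powersetCard,
          Finset.card_erase_of_mem hvV, hV]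
        · have h1 : (s+1)*(m+1) - 1 = (s+1)*m + s := by
            have h2 : (s+1)*(m+1) = (s+1)*m + s + 1 := by ring
            omega
          rw [h1]
        · intro t₁ h₁ t₂ h₂ hins
          simp only [Finset.mem_coe, mem_powersetCard] at h₁ h₂
          have hv₁ : v ∉ t₁ := fun h => (Finset.notMem_erase v V) (h₁.1 h)
          have hv₂ : v ∉ t₂ := fun h => (Finset.notMem_erase v V) (h₂.1 h)
          calc t₁ = (insert v t₁).erase v := (Finset.erase_insert hv₁).symm
          _ = (insert v t₂).erase v := by rw [hins]
          _ = t₂ := Finset.erase_insert hv₂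
      rw [hdecomp, Finset.card_biUnion hdisjU, Finset.sum_mul]
      have hterm : ∀ e ∈ E,
          ((matchingsOn (s+1) (V \ e)).image (insert e)).card
              * ((s+1).factorial ^ (m+1) * (m+1).factorial)
            = ((s+1)*m).factorial * ((s+1).factorial * (m+1)) := by
        intro e he
        obtain ⟨heV, hec, -⟩ := (hEmem e).1 he
        have hcard' : (V \ e).card = (s+1) * m := by
          rw [Finset.card_sdiff_of_subset heV, hV, hec]
          have h1 : (s+1)*(m+1) = (s+1)*m + (s+1) := by ring
          omega
        rw [himg e he]
        have hih := ih (V \ e) hcard'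
        calc (matchingsOn (s+1) (V\e)).card * ((s+1).factorial ^ (m+1) * (m+1).factorial)
            = ((matchingsOn (s+1) (V\e)).card * ((s+1).factorial ^ m * m.factorial))
                * ((s+1).factorial * (m+1)) := by
              rw [pow_succ, Nat.factorial_succ m]; ring
        _ = ((s+1)*m).factorial * ((s+1).factorial * (m+1)) := by rw [hih]
      rw [Finset.sum_congr rfl hterm, Finset.sum_const, smul_eq_mul, hEcard]
      have hch := Nat.choose_mul_factorial_mul_factorial (Nat.le_add_left s ((s+1)*m))
      have hsub : (s+1)*m + s - s = (s+1)*m := by omega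
      rw [hsub] at hch
      have h1 : (s+1)*(m+1) = ((s+1)*m + s) + 1 := by ring
      rw [h1, Nat.factorial_succ s, Nat.factorial_succ ((s+1)*m + s), ← hch]
      ring

lemma matchingsOn_card_eq_of_card_eq (r : ℕ) (hr : 0 < r) {m : ℕ} {V W : Finset ℕ}
    (hV : V.card = r*m) (hW : W.card = r*m) :
    (matchingsOn r V).card = (matchingsOn r W).card :=
  Nat.eq_of_mul_eq_mul_right
    (Nat.mul_pos (pow_pos r.factorial_pos m) m.factorial_pos)
    ((matchingsOn_card_mul r hr m V hV).trans (matchingsOn_card_mul r hr m W hW).symm)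

end Aux

section Aux2
open Finset

lemma mSupport_image_s2 (M : Finset (Finset ℕ)) (f : ℕ → ℕ) :
    mSupport (M.image (fun e => e.image f)) = (mSupport M).image f := by
  classical
  ext x
  show x ∈ (M.image (fun e => e.image f)).sup id ↔ x ∈ (M.sup id).image f
  simp only [Finset.mem_sup, Finset.mem_image, id]
  constructor
  · rintro ⟨e', ⟨e, he, rfl⟩, hx⟩
    obtain ⟨y, hy, rfl⟩ := Finset.mem_image.1 hx
    exact ⟨y, ⟨e, he, hy⟩, rfl⟩
  · rintro ⟨y, ⟨e, he, hy⟩, rfl⟩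
    exact ⟨e.image f, ⟨e, he, rfl⟩, Finset.mem_image_of_mem f hy⟩

lemma hasTwins_mono {M : Finset (Finset ℕ)} {k k' : ℕ} (h : HasTwins M k') (hk : k ≤ k') :
    HasTwins M k := by
  classical
  obtain ⟨M₁, M₂, h1, h2, hdisj, ⟨f, hbij, hmono, rfl⟩, hc1, hc2⟩ := h
  obtain ⟨N₁, hN₁, hN₁c⟩ := Finset.exists_subset_card_eq (hc1 ▸ hk : k ≤ M₁.card)
  have hsupmono : ∀ (P Q : Finset (Finset ℕ)), P ⊆ Q → mSupport P ⊆ mSupport Q := by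
    intro P Q hPQ x hx
    simp only [mSupport, Finset.mem_sup] at hx ⊢
    obtain ⟨e, he, hxe⟩ := hx
    exact ⟨e, hPQ he, hxe⟩
  have hsubsupp : mSupport N₁ ⊆ mSupport M₁ := hsupmono _ _ hN₁
  have hinj2 : ∀ e₁ ∈ N₁, ∀ e₂ ∈ N₁, e₁.image f = e₂.image f → e₁ = e₂ := by
    intro e₁ he₁ e₂ he₂ heq
    have hs₁ : e₁ ⊆ mSupport M₁ := Finset.Subset.trans (by exact Finset.le_sup (f := id) he₁) hsubsupp
    have hs₂ : e₂ ⊆ mSupport M₁ := Finset.Subset.trans (by exact Finset.le_sup (f := id) he₂) hsubsupp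
    apply Finset.Subset.antisymm <;> intro x hx
    · have : f x ∈ e₂.image f := heq ▸ Finset.mem_image_of_mem f hx
      obtain ⟨y, hy, hxy⟩ := Finset.mem_image.1 this
      have := hbij.injOn (by exact_mod_cast hs₂ hy) (by exact_mod_cast hs₁ hx) hxy
      rwa [← this]
    · have : f x ∈ e₁.image f := heq.symm ▸ Finset.mem_image_of_mem f hx
      obtain ⟨y, hy, hxy⟩ := Finset.mem_image.1 this
      have := hbij.injOn (by exact_mod_cast hs₁ hy) (by exact_mod_cast hs₂ hx) hxy
      rwa [← this]
  refine ⟨N₁, N₁.image (fun e => e.image f), hN₁.trans h1, ?_, ?_, ?_, hN₁c, ?_⟩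
  · exact (Finset.image_subset_image hN₁).trans h2
  · have h2' : mSupport (N₁.image (fun e => e.image f)) ⊆ mSupport (M₁.image (fun e => e.image f)) :=
      hsupmono _ _ (Finset.image_subset_image hN₁)
    exact hdisj.mono hsubsupp h2'
  · refine ⟨f, ?_, ?_, rfl⟩
    · rw [mSupport_image_s2]
      have : ((mSupport N₁).image f : Set ℕ) = f '' (mSupport N₁ : Set ℕ) := Finset.coe_image
      rw [this]
      exact (hbij.injOn.mono (by exact_mod_cast hsubsupp)).bijOn_image
    · intro x hx y hy hxy
      exact hmono x (hsubsupp hx) y (hsubsupp hy) hxy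
  · rw [Finset.card_image_of_injOn (fun e₁ he₁ e₂ he₂ => hinj2 e₁ he₁ e₂ he₂), hN₁c]

lemma matchIso_unique {A B B' : Finset (Finset ℕ)} (hAB : MatchIso A B) (hAB' : MatchIso A B')
    (hsupp : mSupport B = mSupport B') : B = B' := by
  classical
  obtain ⟨f, hbij, hmono, hB⟩ := hAB
  obtain ⟨g, hbij', hmono', hB'⟩ := hAB'
  set s := mSupport A with hs
  have himgf : s.image f = mSupport B := by
    apply Finset.coe_injective
    rw [Finset.coe_image]
    exact hbij.image_eq
  have himgg : s.image g = mSupport B' := by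
    apply Finset.coe_injective
    rw [Finset.coe_image]
    exact hbij'.image_eq
  have hcardB : (mSupport B).card = s.card := by
    rw [← himgf, Finset.card_image_of_injOn hbij.injOn]
  have hfg : ∀ x ∈ s, f x = g x := by
    have hcardB' : (mSupport B').card = s.card := by
      rw [← himgg, Finset.card_image_of_injOn hbij'.injOn]
    set emb := s.orderEmbOfFin (k := s.card) rfl with hemb
    have hF : (fun i => f (emb i)) = (mSupport B).orderEmbOfFin hcardB := by
      apply Finset.orderEmbOfFin_unique hcardB
      · intro i
        rw [← himgf]
        exact Finset.mem_image_of_mem f (Finset.orderEmbOfFin_mem s rfl i)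
      · intro i j hij
        exact hmono _ (Finset.orderEmbOfFin_mem s rfl i) _ (Finset.orderEmbOfFin_mem s rfl j)
          ((s.orderEmbOfFin rfl).strictMono hij)
    have hG : (fun i => g (emb i)) = (mSupport B).orderEmbOfFin hcardB := by
      have hcard2 : (mSupport B).card = s.card := hcardB
      apply Finset.orderEmbOfFin_unique hcardB
      · intro i
        rw [hsupp, ← himgg]
        exact Finset.mem_image_of_mem g (Finset.orderEmbOfFin_mem s rfl i)
      · intro i j hij
        exact hmono' _ (Finset.orderEmbOfFin_mem s rfl i) _ (Finset.orderEmbOfFin_mem s rfl j)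
          ((s.orderEmbOfFin rfl).strictMono hij)
    intro x hx
    have hxr : x ∈ Set.range (s.orderEmbOfFin (k := s.card) rfl) := by
      rw [Finset.range_orderEmbOfFin]
      exact_mod_cast hx
    obtain ⟨i, hi⟩ := hxr
    have h1 : f (emb i) = g (emb i) := by rw [congrFun hF i, congrFun hG i]
    rw [← hi]
    exact h1
  rw [hB, hB']
  apply Finset.image_congr
  intro e he
  have hesub : e ⊆ s := Finset.le_sup (f := id) he
  exact Finset.image_congr (fun x hx => hfg x (hesub hx))

open scoped Classical in
noncomputable def twinW (k : ℕ) (M : Finset (Finset ℕ)) :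
    Finset (Finset ℕ) × Finset (Finset ℕ) :=
  if h : HasTwins M k then ⟨h.choose, h.choose_spec.choose⟩ else ⟨∅, ∅⟩

lemma twinW_spec {k : ℕ} {M : Finset (Finset ℕ)} (h : HasTwins M k) :
    (twinW k M).1 ⊆ M ∧ (twinW k M).2 ⊆ M ∧
      Disjoint (mSupport (twinW k M).1) (mSupport (twinW k M).2) ∧
      MatchIso (twinW k M).1 (twinW k M).2 ∧ (twinW k M).1.card = k ∧ (twinW k M).2.card = k := by
  simp only [twinW, dif_pos h]
  exact h.choose_spec.choose_spec

lemma orderedMatching_iff (r n : ℕ) (hr : 0 < r) (M : Finset (Finset ℕ)) :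
    IsOrderedMatching r n M ↔ M ∈ matchingsOn r (Finset.Icc 1 (r*n)) := by
  rw [mem_matchingsOn]
  constructor
  · rintro ⟨⟨hc, hd⟩, hcard, hsup⟩
    exact ⟨hc, hd, hsup⟩
  · rintro ⟨hc, hd, hsup⟩
    refine ⟨⟨hc, hd⟩, ?_, hsup⟩
    have h1 : (mSupport M).card = r * M.card := card_msupport hc hd
    have h2 : mSupport M = Finset.Icc 1 (r*n) := hsup
    rw [h2, Nat.card_Icc] at h1
    have h3 : r * n = r * M.card := by omega
    exact (Nat.eq_of_mul_eq_mul_left hr h3).symm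

end Aux2

section Aux3
open Finset

open scoped Classical in
lemma card_twins_le (r : ℕ) (hr : 0 < r) (n m k : ℕ) (hnm : n = m + 2*k) :
    ((matchingsOn r (Finset.Icc 1 (r*n))).filter (fun M => HasTwins M k)).card ≤
      (r*n).choose (r*k) * (matchingsOn r (Finset.Icc 1 (r*k))).card *
        ((r*n - r*k).choose (r*k) * (matchingsOn r (Finset.Icc 1 (r*m))).card) := by
  set V := Finset.Icc 1 (r*n) with hVdef
  have hVcard : V.card = r * n := by rw [hVdef, Nat.card_Icc]; omega
  set K := r * k with hK
  have hrnmk : r * n = r * m + K + K := by rw [hnm, hK]; ring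
  set T := (V.powersetCard K).sigma (fun B₁ => (matchingsOn r B₁).sigma (fun M₁ =>
      ((V \ B₁).powersetCard K).sigma (fun B₂ => matchingsOn r (V \ (B₁ ∪ B₂))))) with hT
  -- cardinality of the target
  have hTcard : T.card ≤ (r*n).choose K * ((matchingsOn r (Finset.Icc 1 K)).card *
      (((r*n) - K).choose K * (matchingsOn r (Finset.Icc 1 (r*m))).card)) := by
    rw [hT, Finset.card_sigma]
    have houter : ∀ B₁ ∈ V.powersetCard K,
        ((matchingsOn r B₁).sigma (fun M₁ =>
          ((V \ B₁).powersetCard K).sigma (fun B₂ => matchingsOn r (V \ (B₁ ∪ B₂))))).card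
        ≤ (matchingsOn r (Finset.Icc 1 K)).card *
            (((r*n) - K).choose K * (matchingsOn r (Finset.Icc 1 (r*m))).card) := by
      intro B₁ hB₁
      obtain ⟨hB₁V, hB₁c⟩ := mem_powersetCard.1 hB₁
      rw [Finset.card_sigma]
      have hmid : ∀ M₁ ∈ matchingsOn r B₁,
          (((V \ B₁).powersetCard K).sigma (fun B₂ => matchingsOn r (V \ (B₁ ∪ B₂)))).card
          ≤ ((r*n) - K).choose K * (matchingsOn r (Finset.Icc 1 (r*m))).card := by
        intro M₁ _
        rw [Finset.card_sigma]
        have hin : ∀ B₂ ∈ (V \ B₁).powersetCard K,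
            (matchingsOn r (V \ (B₁ ∪ B₂))).card = (matchingsOn r (Finset.Icc 1 (r*m))).card := by
          intro B₂ hB₂
          obtain ⟨hB₂V, hB₂c⟩ := mem_powersetCard.1 hB₂
          have hdisj : Disjoint B₁ B₂ := by
            rw [Finset.disjoint_right]
            intro x hx2 hx1
            exact (Finset.mem_sdiff.1 (hB₂V hx2)).2 hx1
          have hsub : B₁ ∪ B₂ ⊆ V :=
            Finset.union_subset hB₁V (hB₂V.trans (Finset.sdiff_subset))
          have hcV : (V \ (B₁ ∪ B₂)).card = r * m := by
            rw [Finset.card_sdiff_of_subset hsub, Finset.card_union_of_disjoint hdisj, hVcard, hB₁c, hB₂c]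
            omega
          exact matchingsOn_card_eq_of_card_eq r hr hcV (by rw [Nat.card_Icc]; omega)
        calc ∑ B₂ ∈ (V \ B₁).powersetCard K, (matchingsOn r (V \ (B₁ ∪ B₂))).card
            = ∑ _B₂ ∈ (V \ B₁).powersetCard K, (matchingsOn r (Finset.Icc 1 (r*m))).card :=
              Finset.sum_congr rfl hin
          _ = ((V \ B₁).powersetCard K).card * (matchingsOn r (Finset.Icc 1 (r*m))).card := by
              rw [Finset.sum_const, smul_eq_mul]
          _ ≤ ((r*n) - K).choose K * (matchingsOn r (Finset.Icc 1 (r*m))).card := by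
              rw [Finset.card_powersetCard, Finset.card_sdiff_of_subset hB₁V, hVcard, hB₁c]
      calc ∑ M₁ ∈ matchingsOn r B₁, (((V \ B₁).powersetCard K).sigma
              (fun B₂ => matchingsOn r (V \ (B₁ ∪ B₂)))).card
          ≤ (matchingsOn r B₁).card *
              (((r*n) - K).choose K * (matchingsOn r (Finset.Icc 1 (r*m))).card) := by
            have := Finset.sum_le_card_nsmul (matchingsOn r B₁) _
              (((r*n) - K).choose K * (matchingsOn r (Finset.Icc 1 (r*m))).card) hmid
            simpa [smul_eq_mul] using this
        _ = (matchingsOn r (Finset.Icc 1 K)).card *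
              (((r*n) - K).choose K * (matchingsOn r (Finset.Icc 1 (r*m))).card) := by
            rw [matchingsOn_card_eq_of_card_eq r hr (m := k) (V := B₁) (W := Finset.Icc 1 K) (hB₁c.trans hK) (by rw [Nat.card_Icc, hK]; omega)]
    calc ∑ B₁ ∈ V.powersetCard K, _
        ≤ (V.powersetCard K).card * ((matchingsOn r (Finset.Icc 1 K)).card *
            (((r*n) - K).choose K * (matchingsOn r (Finset.Icc 1 (r*m))).card)) := by
          have := Finset.sum_le_card_nsmul (V.powersetCard K) _
            ((matchingsOn r (Finset.Icc 1 K)).card *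
              (((r*n) - K).choose K * (matchingsOn r (Finset.Icc 1 (r*m))).card)) houter
          simpa [smul_eq_mul] using this
      _ = (r*n).choose K * ((matchingsOn r (Finset.Icc 1 K)).card *
            (((r*n) - K).choose K * (matchingsOn r (Finset.Icc 1 (r*m))).card)) := by
          rw [Finset.card_powersetCard, hVcard]
  -- the injection
  have hinj : ((matchingsOn r V).filter (fun M => HasTwins M k)).card ≤ T.card := by
    set Φ : Finset (Finset ℕ) →
        ((_ : Finset ℕ) × (_ : Finset (Finset ℕ)) × (_ : Finset ℕ) × Finset (Finset ℕ)) :=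
      fun M => ⟨mSupport (twinW k M).1, (twinW k M).1, mSupport (twinW k M).2,
        M \ ((twinW k M).1 ∪ (twinW k M).2)⟩ with hΦ
    apply Finset.card_le_card_of_injOn Φ
    · -- maps into T
      intro M hM
      simp only [hΦ]
      obtain ⟨hMm, hTw⟩ := Finset.mem_filter.1 hM
      obtain ⟨hc, hd, hsup⟩ := mem_matchingsOn.1 hMm
      obtain ⟨hs1, hs2, hdis, hiso, hc1, hc2⟩ := twinW_spec hTw
      set M₁ := (twinW k M).1 with hM₁
      set M₂ := (twinW k M).2 with hM₂
      have hc1' : ∀ e ∈ M₁, e.card = r := fun e he => hc e (hs1 he)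
      have hd1 : ∀ e ∈ M₁, ∀ f ∈ M₁, e ≠ f → Disjoint e f :=
        fun e he f hf => hd e (hs1 he) f (hs1 hf)
      have hc2' : ∀ e ∈ M₂, e.card = r := fun e he => hc e (hs2 he)
      have hd2 : ∀ e ∈ M₂, ∀ f ∈ M₂, e ≠ f → Disjoint e f :=
        fun e he f hf => hd e (hs2 he) f (hs2 hf)
      have hsupp1 : mSupport M₁ ⊆ V := by
        rw [← hsup]
        intro x hx
        simp only [mSupport, Finset.mem_sup] at hx ⊢
        obtain ⟨e, he, hxe⟩ := hx
        exact ⟨e, hs1 he, hxe⟩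
      have hsupp2 : mSupport M₂ ⊆ V := by
        rw [← hsup]
        intro x hx
        simp only [mSupport, Finset.mem_sup] at hx ⊢
        obtain ⟨e, he, hxe⟩ := hx
        exact ⟨e, hs2 he, hxe⟩
      have hcard1 : (mSupport M₁).card = K := by
        rw [card_msupport hc1' hd1, hc1, hK]
      have hcard2 : (mSupport M₂).card = K := by
        rw [card_msupport hc2' hd2, hc2, hK]
      rw [hT]
      refine Finset.mem_sigma.2 ⟨mem_powersetCard.2 ⟨hsupp1, hcard1⟩, ?_⟩
      refine Finset.mem_sigma.2 ⟨mem_matchingsOn.2 ⟨hc1', hd1, rfl⟩, ?_⟩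
      refine Finset.mem_sigma.2 ⟨mem_powersetCard.2 ⟨Finset.subset_sdiff.2 ⟨hsupp2, hdis.symm⟩,
        hcard2⟩, ?_⟩
      refine mem_matchingsOn.2 ⟨fun e he => hc e (Finset.mem_sdiff.1 he).1,
        fun e he f hf => hd e (Finset.mem_sdiff.1 he).1 f (Finset.mem_sdiff.1 hf).1, ?_⟩
      apply Finset.Subset.antisymm
      · intro x hx
        obtain ⟨e, he, hxe⟩ := Finset.mem_sup.1 hx
        obtain ⟨heM, heN⟩ := Finset.mem_sdiff.1 he
        refine Finset.mem_sdiff.2 ⟨?_, ?_⟩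
        · rw [← hsup]
          exact Finset.mem_sup.2 ⟨e, heM, hxe⟩
        · intro hxS
          rcases Finset.mem_union.1 hxS with hxS | hxS
          · obtain ⟨g, hg, hxg⟩ := by
              have h' := hxS
              simp only [mSupport, Finset.mem_sup] at h'
              exact h'
            have hgM : g ∈ M := hs1 hg
            have hne : e ≠ g := fun h => heN (Finset.mem_union.2 (Or.inl (h ▸ hg)))
            exact Finset.disjoint_left.1 (hd e heM g hgM hne) hxe hxg
          · obtain ⟨g, hg, hxg⟩ := by
              have h' := hxS
              simp only [mSupport, Finset.mem_sup] at h'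
              exact h'
            have hgM : g ∈ M := hs2 hg
            have hne : e ≠ g := fun h => heN (Finset.mem_union.2 (Or.inr (h ▸ hg)))
            exact Finset.disjoint_left.1 (hd e heM g hgM hne) hxe hxg
      · intro x hx
        obtain ⟨hxV, hxS⟩ := Finset.mem_sdiff.1 hx
        have hxs : x ∈ M.sup id := by rw [hsup]; exact hxV
        obtain ⟨e, heM, hxe⟩ := Finset.mem_sup.1 hxs
        refine Finset.mem_sup.2 ⟨e, Finset.mem_sdiff.2 ⟨heM, fun hmem => ?_⟩, hxe⟩
        rcases Finset.mem_union.1 hmem with h | h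
        · refine hxS (Finset.mem_union.2 (Or.inl ?_))
          simp only [mSupport, Finset.mem_sup]
          exact ⟨e, h, hxe⟩
        · refine hxS (Finset.mem_union.2 (Or.inr ?_))
          simp only [mSupport, Finset.mem_sup]
          exact ⟨e, h, hxe⟩
    · -- injectivity
      intro M hM M' hM' heq
      simp only [Finset.coe_filter, Set.mem_setOf_eq] at hM hM'
      have hTw : HasTwins M k := hM.2
      have hTw' : HasTwins M' k := hM'.2
      obtain ⟨hs1, hs2, -, hiso, -, -⟩ := twinW_spec hTw
      obtain ⟨hs1', hs2', -, hiso', -, -⟩ := twinW_spec hTw'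
      simp only [hΦ] at heq
      have hM1 : (twinW k M).1 = (twinW k M').1 := congrArg (fun p => p.2.1) heq
      have hS2 : mSupport (twinW k M).2 = mSupport (twinW k M').2 :=
        congrArg (fun p => p.2.2.1) heq
      have hR : M \ ((twinW k M).1 ∪ (twinW k M).2)
          = M' \ ((twinW k M').1 ∪ (twinW k M').2) := congrArg (fun p => p.2.2.2) heq
      have hM2 : (twinW k M).2 = (twinW k M').2 := by
        refine matchIso_unique ?_ hiso' hS2
        rw [← hM1]
        exact hiso
      have hMeq : M = ((twinW k M).1 ∪ (twinW k M).2) ∪ (M \ ((twinW k M).1 ∪ (twinW k M).2)) :=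
        (Finset.union_sdiff_of_subset (Finset.union_subset hs1 hs2)).symm
      have hMeq' : M' = ((twinW k M').1 ∪ (twinW k M').2) ∪
          (M' \ ((twinW k M').1 ∪ (twinW k M').2)) :=
        (Finset.union_sdiff_of_subset (Finset.union_subset hs1' hs2')).symm
      rw [hMeq, hR, hM1, hM2, ← hMeq']
  calc ((matchingsOn r V).filter (fun M => HasTwins M k)).card ≤ T.card := hinj
    _ ≤ (r*n).choose K * ((matchingsOn r (Finset.Icc 1 K)).card *
          (((r*n) - K).choose K * (matchingsOn r (Finset.Icc 1 (r*m))).card)) := hTcard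
    _ = (r*n).choose (r*k) * (matchingsOn r (Finset.Icc 1 (r*k))).card *
          ((r*n - r*k).choose (r*k) * (matchingsOn r (Finset.Icc 1 (r*m))).card) := by
        rw [hK]; ring

end Aux3

section Aux4
open Finset

lemma factorial_add_le (m : ℕ) : ∀ j : ℕ, (m + j).factorial ≤ (m + j)^j * m.factorial
  | 0 => by simp
  | (j+1) => by
      have hrec := factorial_add_le m j
      have h0 : m + (j+1) = (m + j) + 1 := rfl
      calc (m + (j+1)).factorial = (m + j + 1) * (m + j).factorial := by
            rw [h0, Nat.factorial_succ]
        _ ≤ (m + j + 1) * ((m + j)^j * m.factorial) := Nat.mul_le_mul_left _ hrec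
        _ ≤ (m + j + 1) * ((m + j + 1)^j * m.factorial) :=
            Nat.mul_le_mul_left _ (Nat.mul_le_mul_right _ (Nat.pow_le_pow_left (by omega) j))
        _ = (m + (j+1))^(j+1) * m.factorial := by
            rw [h0]; ring

lemma pow_le_factorial_mul_exp (j : ℕ) : (j:ℝ)^j ≤ (j.factorial : ℝ) * Real.exp 1 ^ j := by
  have h := Real.sum_le_exp_of_nonneg (x := (j:ℝ)) (Nat.cast_nonneg j) (j+1)
  have hterm : (j:ℝ)^j / (j.factorial:ℝ) ≤ Real.exp j := by
    refine le_trans ?_ h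
    exact Finset.single_le_sum (f := fun i => (j:ℝ)^i / (i.factorial:ℝ))
      (fun i _ => by positivity) (Finset.self_mem_range_succ j)
  rw [div_le_iff₀ (by positivity)] at hterm
  rw [Real.exp_one_pow]
  calc (j:ℝ)^j ≤ Real.exp j * (j.factorial:ℝ) := hterm
    _ = (j.factorial:ℝ) * Real.exp j := mul_comm _ _

lemma final_bound (r n m k : ℕ) (c : ℝ) (hc : Real.exp 1 < c) (hr : 0 < r)
    (hnm : n = m + 2*k)
    (hkc : c * (n:ℝ) ^ ((2:ℝ)/((r:ℝ)+1)) ≤ (k:ℝ)) :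
    ((r.factorial : ℝ))^k * (n.factorial : ℝ) ≤
      ((Real.exp 1 / c)^(r+1))^k *
        (((r*k).factorial : ℝ) * ((k.factorial : ℝ) * (m.factorial : ℝ))) := by
  have he0 : (0:ℝ) < Real.exp 1 := Real.exp_pos 1
  have hc0 : (0:ℝ) < c := he0.trans hc
  set E := Real.exp 1 with hE
  have hn0 : (0:ℝ) ≤ (n:ℝ) := Nat.cast_nonneg n
  have h5 : c^(r+1) * (n:ℝ)^2 ≤ (k:ℝ)^(r+1) := by
    have hbase : (0:ℝ) ≤ c * (n:ℝ) ^ ((2:ℝ)/((r:ℝ)+1)) := by positivity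
    have hp := pow_le_pow_left₀ hbase hkc (r+1)
    calc c^(r+1) * (n:ℝ)^2 = (c * (n:ℝ) ^ ((2:ℝ)/((r:ℝ)+1)))^(r+1) := by
          rw [mul_pow]
          congr 1
          rw [← Real.rpow_natCast ((n:ℝ) ^ ((2:ℝ)/((r:ℝ)+1))) (r+1), ← Real.rpow_mul hn0]
          rw [show (2:ℝ)/((r:ℝ)+1) * (((r:ℕ)+1 : ℕ):ℝ) = 2 by
            push_cast
            have : ((r:ℝ)+1) ≠ 0 := by positivity
            field_simp]
          rw [show ((2:ℝ)) = ((2:ℕ):ℝ) by norm_num, Real.rpow_natCast]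
      _ ≤ (k:ℝ)^(r+1) := hp
  have h1 : (n.factorial : ℝ) ≤ (n:ℝ)^(2*k) * (m.factorial:ℝ) := by
    have h := factorial_add_le m (2*k)
    rw [← hnm] at h
    exact_mod_cast h
  have h2 : ((r*k:ℕ):ℝ)^(r*k) ≤ ((r*k).factorial:ℝ) * E^(r*k) := pow_le_factorial_mul_exp (r*k)
  have h3 : ((k:ℕ):ℝ)^k ≤ (k.factorial:ℝ) * E^k := pow_le_factorial_mul_exp k
  have h4 : (r.factorial:ℝ) ≤ (r:ℝ)^r := by exact_mod_cast Nat.factorial_le_pow r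
  have hkey : (n:ℝ)^2 * E^(r+1) ≤ ((E/c)^(r+1)) * (k:ℝ)^(r+1) := by
    calc (n:ℝ)^2 * E^(r+1) = ((E/c)^(r+1)) * (c^(r+1) * (n:ℝ)^2) := by
          rw [div_pow, div_mul_eq_mul_div, eq_div_iff (by positivity)]
          ring
      _ ≤ ((E/c)^(r+1)) * (k:ℝ)^(r+1) := by
          apply mul_le_mul_of_nonneg_left h5 (by positivity)
  have hkey2 : ((n:ℝ)^2 * E^(r+1))^k ≤ (((E/c)^(r+1)) * (k:ℝ)^(r+1))^k :=
    pow_le_pow_left₀ (by positivity) hkey k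
  have hfirst : ((r.factorial : ℝ))^k * (n.factorial : ℝ)
      ≤ ((r:ℝ)^r)^k * ((n:ℝ)^(2*k) * (m.factorial:ℝ)) := by
    apply mul_le_mul (pow_le_pow_left₀ (by positivity) h4 k) h1 (by positivity) (by positivity)
  apply le_of_mul_le_mul_right _ (show (0:ℝ) < E^(r*k) * E^k by positivity)
  calc ((r.factorial : ℝ))^k * (n.factorial : ℝ) * (E^(r*k) * E^k)
      ≤ ((r:ℝ)^r)^k * ((n:ℝ)^(2*k) * (m.factorial:ℝ)) * (E^(r*k) * E^k) :=
        mul_le_mul_of_nonneg_right hfirst (by positivity)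
    _ = ((n:ℝ)^2 * E^(r+1))^k * ((r:ℝ)^(r*k) * (m.factorial:ℝ)) := by ring
    _ ≤ (((E/c)^(r+1)) * (k:ℝ)^(r+1))^k * ((r:ℝ)^(r*k) * (m.factorial:ℝ)) :=
        mul_le_mul_of_nonneg_right hkey2 (by positivity)
    _ = ((E/c)^(r+1))^k * (((r:ℝ)*(k:ℝ))^(r*k) * ((k:ℝ)^k * (m.factorial:ℝ))) := by ring
    _ = ((E/c)^(r+1))^k * (((r*k:ℕ):ℝ)^(r*k) * (((k:ℕ):ℝ)^k * (m.factorial:ℝ))) := by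
        push_cast
        ring
    _ ≤ ((E/c)^(r+1))^k * (((((r*k).factorial:ℝ)) * E^(r*k)) * (((k.factorial:ℝ) * E^k) * (m.factorial:ℝ))) := by
        apply mul_le_mul_of_nonneg_left _ (by positivity)
        apply mul_le_mul h2 (mul_le_mul_of_nonneg_right h3 (by positivity)) (by positivity)
          (by positivity)
    _ = ((E/c)^(r+1))^k * (((r*k).factorial : ℝ) * ((k.factorial : ℝ) * (m.factorial : ℝ)))
          * (E^(r*k) * E^k) := by ring

end Aux4

/-- upper bound in Theorem 1.1, `thm:random`.
For every `r ≥ 2` and every `c > e`, the proportion of ordered `r`-matchings of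
size `n` containing twins of size at least `c · n^{2/(r+1)}` tends to `0`. -/

theorem random_upper_bound (r : ℕ) (hr : 2 ≤ r) (c : ℝ) (hc : Real.exp 1 < c) :
    Filter.Tendsto (fun n : ℕ =>
      (Nat.card {M : Finset (Finset ℕ) | IsOrderedMatching r n M ∧
          ∃ k : ℕ, c * (n : ℝ) ^ ((2 : ℝ) / ((r : ℝ) + 1)) ≤ (k : ℝ) ∧ HasTwins M k} : ℝ) /
        (Nat.card {M : Finset (Finset ℕ) | IsOrderedMatching r n M} : ℝ))
      Filter.atTop (nhds 0) := by
  classical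
  have hr0 : 0 < r := by omega
  have he0 : (0:ℝ) < Real.exp 1 := Real.exp_pos 1
  have hc0 : (0:ℝ) < c := he0.trans hc
  set q : ℝ := (Real.exp 1 / c) ^ (r+1) with hq
  have hq0 : (0:ℝ) ≤ q := by positivity
  have hq1 : q < 1 := by
    rw [hq]
    apply pow_lt_one₀ (by positivity) ((div_lt_one hc0).2 hc) (by omega)
  set kf : ℕ → ℕ := fun n => ⌈c * (n:ℝ) ^ ((2:ℝ)/((r:ℝ)+1))⌉₊ with hkf
  have htt : Filter.Tendsto (fun n : ℕ => q ^ kf n) Filter.atTop (nhds 0) := by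
    have h1 : Filter.Tendsto kf Filter.atTop Filter.atTop := by
      rw [hkf]
      apply tendsto_nat_ceil_atTop.comp
      apply Filter.Tendsto.const_mul_atTop hc0
      exact (tendsto_rpow_atTop (by positivity)).comp tendsto_natCast_atTop_atTop
    exact (tendsto_pow_atTop_nhds_zero_of_lt_one hq0 hq1).comp h1
  apply tendsto_of_tendsto_of_tendsto_of_le_of_le' tendsto_const_nhds htt
  · filter_upwards with n
    positivity
  · filter_upwards with n
    -- the key bound for every n
    set k := kf n with hk
    have hkc : c * (n:ℝ) ^ ((2:ℝ)/((r:ℝ)+1)) ≤ (k:ℝ) := by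
      rw [hk, hkf]
      exact Nat.le_ceil _
    have hdenset : {M : Finset (Finset ℕ) | IsOrderedMatching r n M}
        = ↑(matchingsOn r (Finset.Icc 1 (r*n))) := by
      ext M
      simp only [Set.mem_setOf_eq, Finset.mem_coe]
      exact orderedMatching_iff r n hr0 M
    have hden : (Nat.card {M : Finset (Finset ℕ) | IsOrderedMatching r n M} : ℕ)
        = (matchingsOn r (Finset.Icc 1 (r*n))).card := by
      rw [hdenset, Nat.card_coe_set_eq, Set.ncard_coe_finset]
    have hnumsub : {M : Finset (Finset ℕ) | IsOrderedMatching r n M ∧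
          ∃ k' : ℕ, c * (n : ℝ) ^ ((2 : ℝ) / ((r : ℝ) + 1)) ≤ (k' : ℝ) ∧ HasTwins M k'}
        ⊆ ↑((matchingsOn r (Finset.Icc 1 (r*n))).filter (fun M => HasTwins M k)) := by
      rintro M ⟨hOM, k', hk', hTw⟩
      simp only [Finset.coe_filter, Set.mem_setOf_eq]
      refine ⟨(orderedMatching_iff r n hr0 M).1 hOM, hasTwins_mono hTw ?_⟩
      rw [hk, hkf]
      exact Nat.ceil_le.2 hk'
    have hnum : (Nat.card {M : Finset (Finset ℕ) | IsOrderedMatching r n M ∧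
          ∃ k' : ℕ, c * (n : ℝ) ^ ((2 : ℝ) / ((r : ℝ) + 1)) ≤ (k' : ℝ) ∧ HasTwins M k'} : ℕ)
        ≤ ((matchingsOn r (Finset.Icc 1 (r*n))).filter (fun M => HasTwins M k)).card := by
      rw [Nat.card_coe_set_eq]
      calc ({M : Finset (Finset ℕ) | IsOrderedMatching r n M ∧
            ∃ k' : ℕ, c * (n : ℝ) ^ ((2 : ℝ) / ((r : ℝ) + 1)) ≤ (k' : ℝ) ∧ HasTwins M k'}).ncard
          ≤ (↑((matchingsOn r (Finset.Icc 1 (r*n))).filter (fun M => HasTwins M k)) :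
              Set (Finset (Finset ℕ))).ncard :=
            Set.ncard_le_ncard hnumsub (Finset.finite_toSet _)
        _ = _ := Set.ncard_coe_finset _
    by_cases h2k : 2 * k ≤ n
    · -- main case
      set m := n - 2*k with hm
      have hnm : n = m + 2*k := by omega
      have hcb := card_twins_le r hr0 n m k hnm
      have hZ := matchingsOn_card_mul r hr0 n (Finset.Icc 1 (r*n)) (by rw [Nat.card_Icc]; omega)
      have hcK := matchingsOn_card_mul r hr0 k (Finset.Icc 1 (r*k)) (by rw [Nat.card_Icc]; omega)
      have hcm := matchingsOn_card_mul r hr0 m (Finset.Icc 1 (r*m)) (by rw [Nat.card_Icc]; omega)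
      have hrk_le : r*k ≤ r*n := Nat.mul_le_mul_left r (by omega)
      have hmul1 : r*n = r*m + r*k + r*k := by rw [hnm]; ring
      have hmul2 : r*(m+k) = r*m + r*k := by ring
      have hsub1 : r*n - r*k = r*(m+k) := by omega
      have hC1 := Nat.choose_mul_factorial_mul_factorial hrk_le
      rw [hsub1] at hC1
      have hrk_le2 : r*k ≤ r*(m+k) := Nat.mul_le_mul_left r (by omega)
      have hC2 := Nat.choose_mul_factorial_mul_factorial hrk_le2
      have hsub2 : r*(m+k) - r*k = r*m := by omega
      rw [hsub2] at hC2
      rw [hsub1] at hcb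
      set Z := (matchingsOn r (Finset.Icc 1 (r*n))).card with hZdef
      set cK := (matchingsOn r (Finset.Icc 1 (r*k))).card with hcKdef
      set cm := (matchingsOn r (Finset.Icc 1 (r*m))).card with hcmdef
      set C1 := (r*n).choose (r*k) with hC1def
      set C2 := (r*(m+k)).choose (r*k) with hC2def
      have hZpos : 0 < Z := by
        rcases Nat.eq_zero_or_pos Z with h | h
        · exfalso
          rw [h, zero_mul] at hZ
          exact (Nat.factorial_pos (r*n)).ne' hZ.symm
        · exact h
      have hZpos' : (0:ℝ) < (Z:ℝ) := by exact_mod_cast hZpos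
      have hZr : (Z:ℝ) * ((r.factorial:ℝ)^n * (n.factorial:ℝ)) = ((r*n).factorial:ℝ) := by
        exact_mod_cast hZ
      have hcKr : (cK:ℝ) * ((r.factorial:ℝ)^k * (k.factorial:ℝ)) = ((r*k).factorial:ℝ) := by
        exact_mod_cast hcK
      have hcmr : (cm:ℝ) * ((r.factorial:ℝ)^m * (m.factorial:ℝ)) = ((r*m).factorial:ℝ) := by
        exact_mod_cast hcm
      have hC1r : (C1:ℝ) * ((r*k).factorial:ℝ) * ((r*(m+k)).factorial:ℝ) = ((r*n).factorial:ℝ) := by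
        exact_mod_cast hC1
      have hC2r : (C2:ℝ) * ((r*k).factorial:ℝ) * ((r*m).factorial:ℝ) = ((r*(m+k)).factorial:ℝ) := by
        exact_mod_cast hC2
      have FB := final_bound r n m k c hc hr0 hnm hkc
      have hpow : (r.factorial:ℝ)^n = ((r.factorial:ℝ)^m * (r.factorial:ℝ)^k) * (r.factorial:ℝ)^k := by
        rw [hnm]; ring
      rw [hden]
      calc (Nat.card {M : Finset (Finset ℕ) | IsOrderedMatching r n M ∧
            ∃ k' : ℕ, c * (n : ℝ) ^ ((2 : ℝ) / ((r : ℝ) + 1)) ≤ (k' : ℝ) ∧ HasTwins M k'} : ℝ) / (Z:ℝ)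
          ≤ (((matchingsOn r (Finset.Icc 1 (r*n))).filter (fun M => HasTwins M k)).card : ℝ) / (Z:ℝ) :=
            (div_le_div_iff_of_pos_right hZpos').2 (Nat.cast_le.2 hnum)
        _ ≤ ((C1 * cK * (C2 * cm) : ℕ) : ℝ) / (Z:ℝ) :=
            (div_le_div_iff_of_pos_right hZpos').2 (Nat.cast_le.2 hcb)
        _ ≤ q ^ k := by
            rw [div_le_iff₀ hZpos']
            push_cast
            set W : ℝ := (((r*k).factorial:ℝ) * ((r*(m+k)).factorial:ℝ)) *
              (((r.factorial:ℝ)^k * (k.factorial:ℝ)) *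
                ((((r*k).factorial:ℝ) * ((r*m).factorial:ℝ)) *
                  (((r.factorial:ℝ)^m * (m.factorial:ℝ)) *
                    ((r.factorial:ℝ)^n * (n.factorial:ℝ))))) with hW
            have hWpos : (0:ℝ) < W := by rw [hW]; positivity
            apply le_of_mul_le_mul_right _ hWpos
            have hZr' : ((r*n).factorial:ℝ) = (Z:ℝ) * ((r.factorial:ℝ)^n * (n.factorial:ℝ)) :=
              hZr.symm
            calc ((C1:ℝ) * (cK:ℝ) * ((C2:ℝ) * (cm:ℝ))) * W
                = ((C1:ℝ) * ((r*k).factorial:ℝ) * ((r*(m+k)).factorial:ℝ)) *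
                    (((cK:ℝ) * ((r.factorial:ℝ)^k * (k.factorial:ℝ))) *
                      (((C2:ℝ) * ((r*k).factorial:ℝ) * ((r*m).factorial:ℝ)) *
                        (((cm:ℝ) * ((r.factorial:ℝ)^m * (m.factorial:ℝ))) *
                          ((r.factorial:ℝ)^n * (n.factorial:ℝ))))) := by rw [hW]; ring
              _ = ((r*n).factorial:ℝ) * (((r*k).factorial:ℝ) * (((r*(m+k)).factorial:ℝ) *
                    (((r*m).factorial:ℝ) * ((r.factorial:ℝ)^n * (n.factorial:ℝ))))) := by
                  rw [hC1r, hcKr, hC2r, hcmr]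
              _ = ((r.factorial:ℝ)^k * (n.factorial:ℝ)) *
                    (((r*n).factorial:ℝ) * (((r*k).factorial:ℝ) * (((r*(m+k)).factorial:ℝ) *
                      (((r*m).factorial:ℝ) * ((r.factorial:ℝ)^m * (r.factorial:ℝ)^k))))) := by
                  rw [hpow]; ring
              _ ≤ (q^k * (((r*k).factorial : ℝ) * ((k.factorial : ℝ) * (m.factorial : ℝ)))) *
                    (((r*n).factorial:ℝ) * (((r*k).factorial:ℝ) * (((r*(m+k)).factorial:ℝ) *
                      (((r*m).factorial:ℝ) * ((r.factorial:ℝ)^m * (r.factorial:ℝ)^k))))) := by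
                  apply mul_le_mul_of_nonneg_right _ (by positivity)
                  rw [hq]
                  exact FB
              _ = (q ^ k * (Z:ℝ)) * W := by
                  rw [hW, hZr']; ring
    · -- degenerate case : the numerator set is empty
      have hempty : {M : Finset (Finset ℕ) | IsOrderedMatching r n M ∧
          ∃ k' : ℕ, c * (n : ℝ) ^ ((2 : ℝ) / ((r : ℝ) + 1)) ≤ (k' : ℝ) ∧ HasTwins M k'} = ∅ := by
        rw [Set.eq_empty_iff_forall_notMem]
        rintro M ⟨hOM, k', hk', M₁, M₂, h1, h2, hdisj, -, hc1, hc2⟩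
        have hkk' : k ≤ k' := by rw [hk, hkf]; exact Nat.ceil_le.2 hk'
        have hM12 : Disjoint M₁ M₂ := by
          rw [Finset.disjoint_left]
          intro e he1 he2
          have heM : e ∈ M := h1 he1
          have hrpos : e.card = r := hOM.1.1 e heM
          have hesub1 : e ⊆ mSupport M₁ := by
            intro x hx
            simp only [mSupport, Finset.mem_sup]
            exact ⟨e, he1, hx⟩
          have hesub2 : e ⊆ mSupport M₂ := by
            intro x hx
            simp only [mSupport, Finset.mem_sup]
            exact ⟨e, he2, hx⟩
          have hee : e = ∅ := by
            rw [← Finset.subset_empty]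
            intro x hx
            exact absurd (hesub2 hx) (Finset.disjoint_left.1 hdisj (hesub1 hx))
          rw [hee] at hrpos
          simp at hrpos
          omega
        have hcard : M₁.card + M₂.card ≤ M.card := by
          rw [← Finset.card_union_of_disjoint hM12]
          exact Finset.card_le_card (Finset.union_subset h1 h2)
        rw [hOM.2.1, hc1, hc2] at hcard
        omega
      rw [hempty]
      simp only [Nat.card_coe_set_eq, Set.ncard_empty, Nat.cast_zero, zero_div]
      positivity
end

section
/- Let P be an r-pattern and let M′ = {e_1 < e_2 < ⋯ < e_m} be a P-clique of size m (edges listed in increasing order of their minimal vertices). Then the two sub-matchings {e_1, …, e_{⌊m/2⌋}} and {e_{⌈m/2⌉+1}, …, e_m} are isomorphic and vertex-disjoint; in particular, every P-clique of size m contains twins of size ⌊m/2⌋. -/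
lemma min'_image_strictMonoOn {g : ℕ → ℕ} {s t : Finset ℕ}
    (hst : s ⊆ t) (hg : ∀ x ∈ t, ∀ y ∈ t, x < y → g x < g y) (hs : s.Nonempty) :
    (s.image g).min' (hs.image g) = g (s.min' hs) := by
  apply le_antisymm
  · exact Finset.min'_le _ _ (Finset.mem_image_of_mem g (Finset.min'_mem s hs))
  · obtain ⟨x, hx, hgx⟩ := Finset.mem_image.mp (Finset.min'_mem (s.image g) (hs.image g))
    rw [← hgx]
    rcases eq_or_lt_of_le (Finset.min'_le s x hx) with h | h
    · rw [h]
    · exact le_of_lt (hg _ (hst (Finset.min'_mem s hs)) _ (hst hx) h)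

lemma pair_min_lt_eq {A B C D : Finset ℕ} (h : ({A, B} : Finset (Finset ℕ)) = {C, D})
    (h1 : A.min < B.min) (h2 : C.min < D.min) : A = C ∧ B = D := by
  have hA : A = C ∨ A = D := by
    have : A ∈ ({C, D} : Finset (Finset ℕ)) := h ▸ (by simp)
    simpa using this
  have hB : B = C ∨ B = D := by
    have : B ∈ ({C, D} : Finset (Finset ℕ)) := h ▸ (by simp)
    simpa using this
  have hC : C = A ∨ C = B := by
    have : C ∈ ({A, B} : Finset (Finset ℕ)) := h ▸ (by simp)
    simpa using this
  rcases hA with rfl | rfl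
  · refine ⟨rfl, ?_⟩
    rcases hB with rfl | h'
    · exact absurd h1 (lt_irrefl _)
    · exact h'
  · rcases hC with rfl | rfl
    · exact absurd h2 (lt_irrefl _)
    · exact absurd h2 (lt_asymm h1)

/-- Splitting a `P`-clique `{e_1 < ⋯ < e_m}` (edges listed in
increasing order of minimal vertices, encoded by `StrictMono fun i => (e i).min`)
in half yields two isomorphic, vertex-disjoint sub-matchings; in particular a
`P`-clique of size `m` contains twins of size `⌊m/2⌋`. (Indices are
zero-based: the halves are `{e_i : i < ⌊m/2⌋}` and `{e_i : i ≥ ⌈m/2⌉}`.) -/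
theorem clique_halves_are_twins (r m : ℕ) (hr : 1 ≤ r)
    (P : Finset (Finset ℕ)) (hP : IsPattern r P)
    (e : Fin m → Finset ℕ)
    (hM : IsMatching r (Finset.image e Finset.univ))
    (hclique : IsPClique P (Finset.image e Finset.univ))
    (hord : StrictMono fun i => (e i).min) :
    MatchIso (Finset.image e (Finset.univ.filter fun i : Fin m => (i : ℕ) < m / 2))
             (Finset.image e (Finset.univ.filter fun i : Fin m => (m + 1) / 2 ≤ (i : ℕ))) ∧
    Disjoint
      (mSupport (Finset.image e (Finset.univ.filter fun i : Fin m => (i : ℕ) < m / 2)))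
      (mSupport (Finset.image e (Finset.univ.filter fun i : Fin m => (m + 1) / 2 ≤ (i : ℕ)))) ∧
    HasTwins (Finset.image e Finset.univ) (m / 2) := by
  classical
  obtain ⟨hcard, hdisj⟩ := hM
  have hcard' : ∀ i : Fin m, (e i).card = r := fun i =>
    hcard _ (Finset.mem_image_of_mem e (Finset.mem_univ i))
  have einj : Function.Injective e := fun i j hij => hord.injective (by simp [hij])
  have hne : ∀ i : Fin m, (e i).Nonempty := fun i =>
    Finset.card_pos.mp (by rw [hcard' i]; omega)
  have edisj : ∀ i j : Fin m, i ≠ j → Disjoint (e i) (e j) := fun i j hij =>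
    hdisj _ (Finset.mem_image_of_mem e (Finset.mem_univ i)) _
      (Finset.mem_image_of_mem e (Finset.mem_univ j)) (fun hc => hij (einj hc))
  have hmin : ∀ i j : Fin m, i < j → (e i).min' (hne i) < (e j).min' (hne j) := by
    intro i j hij
    have h1 := hord hij
    simp only at h1
    rw [← Finset.coe_min' (hne i), ← Finset.coe_min' (hne j)] at h1
    exact_mod_cast h1
  have vne : ∀ (i j : Fin m), i ≠ j → ∀ (k l : Fin r),
      (e i).orderEmbOfFin (hcard' i) k ≠ (e j).orderEmbOfFin (hcard' j) l := by
    intro i j hij k l hEq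
    exact Finset.disjoint_left.mp (edisj i j hij)
      (Finset.orderEmbOfFin_mem (e i) (hcard' i) k)
      (hEq ▸ Finset.orderEmbOfFin_mem (e j) (hcard' j) l)
  have vsurj : ∀ (i : Fin m), ∀ x ∈ e i, ∃ k, (e i).orderEmbOfFin (hcard' i) k = x := by
    intro i x hx
    have hx' : x ∈ Set.range ⇑((e i).orderEmbOfFin (hcard' i)) := by
      rw [Finset.range_orderEmbOfFin]; exact hx
    exact hx'
  -- the two edges of the pattern
  obtain ⟨A, B, hPAB, hAcard, hBcard, hABlt⟩ :
      ∃ A B : Finset ℕ, P = {A, B} ∧ A.card = r ∧ B.card = r ∧ A.min < B.min := by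
    obtain ⟨⟨Pcard, Pdisj⟩, Pcard2, _⟩ := hP
    obtain ⟨A, B, hABne, hPeq⟩ := Finset.card_eq_two.mp Pcard2
    have hA : A ∈ P := by rw [hPeq]; simp
    have hB : B ∈ P := by rw [hPeq]; simp
    have hAc : A.card = r := Pcard A hA
    have hBc : B.card = r := Pcard B hB
    have hAne : A.Nonempty := Finset.card_pos.mp (by rw [hAc]; omega)
    have hBne : B.Nonempty := Finset.card_pos.mp (by rw [hBc]; omega)
    have hmm : A.min' hAne ≠ B.min' hBne := fun hc =>
      Finset.disjoint_left.mp (Pdisj A hA B hB hABne) (Finset.min'_mem A hAne)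
        (hc ▸ Finset.min'_mem B hBne)
    rcases lt_or_gt_of_ne hmm with hlt | hlt
    · refine ⟨A, B, hPeq, hAc, hBc, ?_⟩
      rw [← Finset.coe_min' hAne, ← Finset.coe_min' hBne]
      exact_mod_cast hlt
    · refine ⟨B, A, by rw [hPeq]; exact Finset.pair_comm A B, hBc, hAc, ?_⟩
      rw [← Finset.coe_min' hAne, ← Finset.coe_min' hBne]
      exact_mod_cast hlt
  -- for each pair, an order-preserving map sending the two edges to A and B
  have keyPair : ∀ i j : Fin m, i < j → ∃ g : ℕ → ℕ,
      (∀ x ∈ e i ∪ e j, ∀ y ∈ e i ∪ e j, x < y → g x < g y) ∧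
      (e i).image g = A ∧ (e j).image g = B := by
    intro i j hij
    have hne' : e i ≠ e j := fun hc => (Fin.ne_of_lt hij) (einj hc)
    obtain ⟨g, hbij, hmono, hPimg⟩ :=
      hclique (e i) (Finset.mem_image_of_mem e (Finset.mem_univ i))
        (e j) (Finset.mem_image_of_mem e (Finset.mem_univ j)) hne'
    have hsup : mSupport {e i, e j} = e i ∪ e j := by
      simp [mSupport]
    rw [hsup] at hmono
    have hims : P = {(e i).image g, (e j).image g} := by
      rw [hPimg, Finset.image_insert, Finset.image_singleton]
    have h1 : ((e i).image g).min' ((hne i).image g) = g ((e i).min' (hne i)) :=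
      min'_image_strictMonoOn Finset.subset_union_left hmono (hne i)
    have h2 : ((e j).image g).min' ((hne j).image g) = g ((e j).min' (hne j)) :=
      min'_image_strictMonoOn Finset.subset_union_right hmono (hne j)
    have hglt : g ((e i).min' (hne i)) < g ((e j).min' (hne j)) :=
      hmono _ (Finset.mem_union_left _ (Finset.min'_mem _ _))
        _ (Finset.mem_union_right _ (Finset.min'_mem _ _)) (hmin i j hij)
    have hlt : ((e i).image g).min < ((e j).image g).min := by
      rw [← Finset.coe_min' ((hne i).image g), ← Finset.coe_min' ((hne j).image g),
        h1, h2]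
      exact_mod_cast hglt
    have hpair : ({A, B} : Finset (Finset ℕ)) = {(e i).image g, (e j).image g} := by
      rw [← hPAB, hims]
    obtain ⟨hAe, hBe⟩ := pair_min_lt_eq hpair hABlt hlt
    exact ⟨g, hmono, hAe.symm, hBe.symm⟩
  -- comparing vertices across a pair is determined by the pattern
  have L1 : ∀ i j : Fin m, i < j → ∀ k l : Fin r,
      ((e i).orderEmbOfFin (hcard' i) k < (e j).orderEmbOfFin (hcard' j) l ↔
        A.orderEmbOfFin hAcard k < B.orderEmbOfFin hBcard l) := by
    intro i j hij k l
    obtain ⟨g, hmono, hgA, hgB⟩ := keyPair i j hij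
    have memA : ∀ k : Fin r, g ((e i).orderEmbOfFin (hcard' i) k) ∈ A := by
      intro k
      rw [← hgA]
      exact Finset.mem_image_of_mem g (Finset.orderEmbOfFin_mem (e i) (hcard' i) k)
    have monoA : StrictMono (fun k : Fin r => g ((e i).orderEmbOfFin (hcard' i) k)) :=
      fun a b hab => hmono _ (Finset.mem_union_left _ (Finset.orderEmbOfFin_mem _ _ _))
        _ (Finset.mem_union_left _ (Finset.orderEmbOfFin_mem _ _ _))
        (((e i).orderEmbOfFin (hcard' i)).strictMono hab)
    have hA : ∀ k, g ((e i).orderEmbOfFin (hcard' i) k) = A.orderEmbOfFin hAcard k :=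
      fun k => congrFun (Finset.orderEmbOfFin_unique hAcard memA monoA) k
    have memB : ∀ l : Fin r, g ((e j).orderEmbOfFin (hcard' j) l) ∈ B := by
      intro l
      rw [← hgB]
      exact Finset.mem_image_of_mem g (Finset.orderEmbOfFin_mem (e j) (hcard' j) l)
    have monoB : StrictMono (fun l : Fin r => g ((e j).orderEmbOfFin (hcard' j) l)) :=
      fun a b hab => hmono _ (Finset.mem_union_right _ (Finset.orderEmbOfFin_mem _ _ _))
        _ (Finset.mem_union_right _ (Finset.orderEmbOfFin_mem _ _ _))
        (((e j).orderEmbOfFin (hcard' j)).strictMono hab)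
    have hB : ∀ l, g ((e j).orderEmbOfFin (hcard' j) l) = B.orderEmbOfFin hBcard l :=
      fun l => congrFun (Finset.orderEmbOfFin_unique hBcard memB monoB) l
    constructor
    · intro hlt
      rw [← hA k, ← hB l]
      exact hmono _ (Finset.mem_union_left _ (Finset.orderEmbOfFin_mem _ _ _))
        _ (Finset.mem_union_right _ (Finset.orderEmbOfFin_mem _ _ _)) hlt
    · intro hlt
      rcases lt_trichotomy ((e i).orderEmbOfFin (hcard' i) k)
        ((e j).orderEmbOfFin (hcard' j) l) with h | h | h
      · exact h
      · exact absurd h (vne i j (Fin.ne_of_lt hij) k l)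
      · exfalso
        have hgl := hmono _ (Finset.mem_union_right _ (Finset.orderEmbOfFin_mem _ _ _))
          _ (Finset.mem_union_left _ (Finset.orderEmbOfFin_mem _ _ _)) h
        rw [hA k, hB l] at hgl
        exact lt_asymm hlt hgl
  have L1' : ∀ i j i' j' : Fin m, i < j → i' < j' → ∀ k l : Fin r,
      ((e i).orderEmbOfFin (hcard' i) k < (e j).orderEmbOfFin (hcard' j) l ↔
        (e i').orderEmbOfFin (hcard' i') k < (e j').orderEmbOfFin (hcard' j') l) :=
    fun i j i' j' hij hij' k l => (L1 i j hij k l).trans (L1 i' j' hij' k l).symm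
  -- the shift map
  set f : ℕ → ℕ := fun x =>
    if hx : ∃ p : Fin m × Fin r, (p.1 : ℕ) < m / 2 ∧
        (e p.1).orderEmbOfFin (hcard' p.1) p.2 = x then
      (e ⟨(hx.choose.1 : ℕ) + (m + 1) / 2, by
        have h1 := hx.choose.1.isLt
        have h2 := hx.choose_spec.1
        omega⟩).orderEmbOfFin (hcard' _) hx.choose.2
    else x with hfdef
  have L2 : ∀ (i : Fin m), (i : ℕ) < m / 2 → ∀ (k : Fin r) (pf : (i : ℕ) + (m + 1) / 2 < m),
      f ((e i).orderEmbOfFin (hcard' i) k) =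
        (e ⟨(i : ℕ) + (m + 1) / 2, pf⟩).orderEmbOfFin (hcard' _) k := by
    intro i hi k pf
    have hex : ∃ p : Fin m × Fin r, (p.1 : ℕ) < m / 2 ∧
        (e p.1).orderEmbOfFin (hcard' p.1) p.2 = (e i).orderEmbOfFin (hcard' i) k :=
      ⟨(i, k), hi, rfl⟩
    rw [hfdef]
    simp only
    rw [dif_pos hex]
    have h2 := hex.choose_spec.2
    have hIdx : hex.choose.1 = i := by
      by_contra hcon
      exact vne _ _ hcon _ _ h2
    rw [hIdx] at h2
    have hK : hex.choose.2 = k := ((e i).orderEmbOfFin (hcard' i)).injective h2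
    have key : ∀ (a b : Fin m), a = b → ∀ (k1 k2 : Fin r), k1 = k2 →
        (e a).orderEmbOfFin (hcard' a) k1 = (e b).orderEmbOfFin (hcard' b) k2 := by
      rintro a b rfl k1 k2 rfl; rfl
    exact key _ _ (Fin.ext (by simp [hIdx])) _ _ hK
  set s1 : Finset (Fin m) := Finset.univ.filter (fun i : Fin m => (i : ℕ) < m / 2) with hs1
  set s2 : Finset (Fin m) := Finset.univ.filter (fun i : Fin m => (m + 1) / 2 ≤ (i : ℕ)) with hs2
  have hsuppmem : ∀ (s : Finset (Fin m)) (x : ℕ),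
      x ∈ mSupport (Finset.image e s) ↔ ∃ i ∈ s, x ∈ e i := by
    intro s x
    simp [mSupport, Finset.mem_sup]
  have mem1 : ∀ x, x ∈ mSupport (Finset.image e s1) ↔
      ∃ i : Fin m, (i : ℕ) < m / 2 ∧ x ∈ e i := by
    intro x
    rw [hsuppmem]
    simp [hs1]
  have mem2 : ∀ x, x ∈ mSupport (Finset.image e s2) ↔
      ∃ i : Fin m, (m + 1) / 2 ≤ (i : ℕ) ∧ x ∈ e i := by
    intro x
    rw [hsuppmem]
    simp [hs2]
  -- f is strictly monotone on the support of the first half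
  have hmono : ∀ x ∈ mSupport (Finset.image e s1), ∀ y ∈ mSupport (Finset.image e s1),
      x < y → f x < f y := by
    intro x hx y hy hxy
    obtain ⟨i, hi, hxi⟩ := (mem1 x).mp hx
    obtain ⟨j, hj, hyj⟩ := (mem1 y).mp hy
    obtain ⟨k, hk⟩ := vsurj i x hxi
    obtain ⟨l, hl⟩ := vsurj j y hyj
    have pfi : (i : ℕ) + (m + 1) / 2 < m := by omega
    have pfj : (j : ℕ) + (m + 1) / 2 < m := by omega
    rw [← hk, ← hl] at hxy ⊢
    rw [L2 i hi k pfi, L2 j hj l pfj]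
    rcases lt_trichotomy i j with hij | rfl | hij
    · have hij' : (⟨(i : ℕ) + (m + 1) / 2, pfi⟩ : Fin m) < ⟨(j : ℕ) + (m + 1) / 2, pfj⟩ := by
        rw [Fin.lt_def] at hij ⊢
        simpa using hij
      exact (L1' i j _ _ hij hij' k l).mp hxy
    · have hkl : k < l := ((e i).orderEmbOfFin (hcard' i)).lt_iff_lt.mp hxy
      exact ((e ⟨(i : ℕ) + (m + 1) / 2, pfi⟩).orderEmbOfFin (hcard' _)).lt_iff_lt.mpr hkl
    · have hij' : (⟨(j : ℕ) + (m + 1) / 2, pfj⟩ : Fin m) < ⟨(i : ℕ) + (m + 1) / 2, pfi⟩ := by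
        rw [Fin.lt_def] at hij ⊢
        simpa using hij
      rcases lt_trichotomy ((e ⟨(i : ℕ) + (m + 1) / 2, pfi⟩).orderEmbOfFin (hcard' _) k)
        ((e ⟨(j : ℕ) + (m + 1) / 2, pfj⟩).orderEmbOfFin (hcard' _) l) with h | h | h
      · exact h
      · exact absurd h (vne _ _ (fun hc => absurd (congrArg Fin.val hc)
          (by simp; omega)) k l)
      · exfalso
        have := (L1' _ _ j i hij' hij l k).mp h
        exact lt_asymm hxy this
  have hmaps : Set.MapsTo f (↑(mSupport (Finset.image e s1)))
      (↑(mSupport (Finset.image e s2))) := by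
    intro x hx
    obtain ⟨i, hi, hxi⟩ := (mem1 x).mp (Finset.mem_coe.mp hx)
    obtain ⟨k, hk⟩ := vsurj i x hxi
    have pfi : (i : ℕ) + (m + 1) / 2 < m := by omega
    rw [Finset.mem_coe, ← hk, L2 i hi k pfi]
    exact (mem2 _).mpr ⟨⟨(i : ℕ) + (m + 1) / 2, pfi⟩, by simp,
      Finset.orderEmbOfFin_mem _ _ _⟩
  have hinj : Set.InjOn f (↑(mSupport (Finset.image e s1))) := by
    intro x hx y hy hxy
    by_contra hne'
    rcases lt_or_gt_of_ne hne' with h | h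
    · exact absurd hxy (ne_of_lt (hmono x (Finset.mem_coe.mp hx) y (Finset.mem_coe.mp hy) h))
    · exact absurd hxy.symm
        (ne_of_lt (hmono y (Finset.mem_coe.mp hy) x (Finset.mem_coe.mp hx) h))
  have hsurjOn : Set.SurjOn f (↑(mSupport (Finset.image e s1)))
      (↑(mSupport (Finset.image e s2))) := by
    intro y hy
    obtain ⟨j, hj, hyj⟩ := (mem2 y).mp (Finset.mem_coe.mp hy)
    obtain ⟨l, hl⟩ := vsurj j y hyj
    have hjm := j.isLt
    have hj2 : ((j : ℕ) - (m + 1) / 2) < m / 2 := by omega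
    have hj3 : ((j : ℕ) - (m + 1) / 2) < m := by omega
    have pf : ((j : ℕ) - (m + 1) / 2) + (m + 1) / 2 < m := by omega
    refine ⟨(e ⟨(j : ℕ) - (m + 1) / 2, hj3⟩).orderEmbOfFin (hcard' _) l, ?_, ?_⟩
    · exact Finset.mem_coe.mpr ((mem1 _).mpr ⟨⟨(j : ℕ) - (m + 1) / 2, hj3⟩, hj2,
        Finset.orderEmbOfFin_mem _ _ _⟩)
    · rw [L2 ⟨(j : ℕ) - (m + 1) / 2, hj3⟩ hj2 l pf]
      have hjj : (⟨((j : ℕ) - (m + 1) / 2) + (m + 1) / 2, pf⟩ : Fin m) = j :=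
        Fin.ext (by simp; omega)
      rw [hjj, hl]
  have himgedge : ∀ (i : Fin m), (i : ℕ) < m / 2 → ∀ (pf : (i : ℕ) + (m + 1) / 2 < m),
      (e i).image f = e ⟨(i : ℕ) + (m + 1) / 2, pf⟩ := by
    intro i hi pf
    have hsub : (e i).image f ⊆ e ⟨(i : ℕ) + (m + 1) / 2, pf⟩ := by
      intro x hx
      obtain ⟨x', hx', rfl⟩ := Finset.mem_image.mp hx
      obtain ⟨k, hk⟩ := vsurj i x' hx'
      rw [← hk, L2 i hi k pf]
      exact Finset.orderEmbOfFin_mem _ _ _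
    refine Finset.eq_of_subset_of_card_le hsub ?_
    rw [Finset.card_image_of_injOn, hcard', hcard']
    intro x hx y hy hxy
    exact hinj (Finset.mem_coe.mpr ((mem1 x).mpr ⟨i, hi, hx⟩))
      (Finset.mem_coe.mpr ((mem1 y).mpr ⟨i, hi, hy⟩)) hxy
  have himgM : Finset.image e s2 = (Finset.image e s1).image (fun s => s.image f) := by
    ext a
    constructor
    · intro ha
      obtain ⟨j, hj, rfl⟩ := Finset.mem_image.mp ha
      have hjH : (m + 1) / 2 ≤ (j : ℕ) := by simpa [hs2] using hj
      have hjm := j.isLt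
      have hj2 : ((j : ℕ) - (m + 1) / 2) < m / 2 := by omega
      have hj3 : ((j : ℕ) - (m + 1) / 2) < m := by omega
      have pf : ((j : ℕ) - (m + 1) / 2) + (m + 1) / 2 < m := by omega
      refine Finset.mem_image.mpr ⟨e ⟨(j : ℕ) - (m + 1) / 2, hj3⟩,
        Finset.mem_image_of_mem e (by simp [hs1]; omega), ?_⟩
      rw [himgedge _ hj2 pf]
      congr 1
      exact Fin.ext (by simp; omega)
    · intro ha
      obtain ⟨s, hs, rfl⟩ := Finset.mem_image.mp ha
      obtain ⟨i, hi, rfl⟩ := Finset.mem_image.mp hs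
      have hi2 : (i : ℕ) < m / 2 := by simpa [hs1] using hi
      have pf : (i : ℕ) + (m + 1) / 2 < m := by omega
      rw [himgedge i hi2 pf]
      exact Finset.mem_image_of_mem e (by simp [hs2])
  have hdisjsupp : Disjoint (mSupport (Finset.image e s1)) (mSupport (Finset.image e s2)) := by
    rw [Finset.disjoint_left]
    intro x hx1 hx2
    obtain ⟨i, hi, hxi⟩ := (mem1 x).mp hx1
    obtain ⟨j, hj, hxj⟩ := (mem2 x).mp hx2
    have hij : i ≠ j := fun hc => by
      have := congrArg Fin.val hc
      omega
    exact Finset.disjoint_left.mp (edisj i j hij) hxi hxj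
  have card1 : (Finset.image e s1).card = m / 2 := by
    rw [Finset.card_image_of_injective _ einj]
    have : s1 = (Finset.range (m / 2)).attachFin
        (fun x hx => by rw [Finset.mem_range] at hx; omega) := by
      ext i
      simp [hs1, Finset.mem_attachFin]
    rw [this, Finset.card_attachFin, Finset.card_range]
  have card2 : (Finset.image e s2).card = m / 2 := by
    rw [Finset.card_image_of_injective _ einj]
    have : s2 = (Finset.Ico ((m + 1) / 2) m).attachFin
        (fun x hx => by rw [Finset.mem_Ico] at hx; omega) := by
      ext i
      have hi := i.isLt
      simp only [hs2, Finset.mem_filter, Finset.mem_univ, true_and,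
        Finset.mem_attachFin, Finset.mem_Ico]
      omega
    rw [this, Finset.card_attachFin, Nat.card_Ico]
    omega
  have hiso : MatchIso (Finset.image e s1) (Finset.image e s2) :=
    ⟨f, ⟨hmaps, hinj, hsurjOn⟩, hmono, himgM⟩
  exact ⟨hiso, hdisjsupp, Finset.image e s1, Finset.image e s2,
    Finset.image_subset_image (Finset.filter_subset _ _),
    Finset.image_subset_image (Finset.filter_subset _ _),
    hdisjsupp, hiso, card1, card2⟩
end
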